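/- arXiv:2403.17290 — 4 statements merged into one kernel-verified Lean document; each statement's English description precedes it below -/
import Mathlib

section
/- (De Werra) Let X and Y be finite sets and let M : X × Y → ℕ be the edge-multiplicity function of a bipartite multigraph with parts X and Y, and let k be a positive integer. Then there exist multiplicity functions M_1, ..., M_k : X × Y → ℕ with M_1(x,y) + ... + M_k(x,y) = M(x,y) for all (x,y), such that: (a) for every vertex x ∈ X and all colors i, j ∈ [k], |Σ_{y∈Y} M_i(x,y) − Σ_{y∈Y} M_j(x,y)| ≤ 1; (b) for every vertex y ∈ Y and all i, j ∈ [k], |Σ_{x∈X} M_i(x,y) − Σ_{x∈X} M_j(x,y)| ≤ 1; and (c) for every pair (x,y) ∈ X × Y and all i, j ∈ [k], |M_i(x,y) − M_j(x,y)| ≤ 1. -/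
open SimpleGraph

/-- `C` is the edge set of a Hamiltonian cycle of `G`. -/
def IsHamCycleEdgeSet {V : Type*} [DecidableEq V] (G : SimpleGraph V)
    (C : Set (Sym2 V)) : Prop :=
  ∃ (v : V) (w : G.Walk v v), w.IsHamiltonianCycle ∧ C = {e | e ∈ w.edges}

/-- `C = (C 0, …, C (n-1))` is a Hamiltonian cycle decomposition of `G`:
a partition of the edge set of `G` into parts, each of which is the edge set of a
Hamiltonian cycle of `G`. -/
def IsHamDecomp {V : Type*} [DecidableEq V] (G : SimpleGraph V) {n : ℕ}
    (C : Fin n → Set (Sym2 V)) : Prop :=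
  (∀ i, IsHamCycleEdgeSet G (C i)) ∧
  Pairwise (Function.onFun Disjoint C) ∧
  (⋃ i, C i) = G.edgeSet

/-- `H` is rainbow in the decomposition `C`: no two edges of `H` lie in the same part. -/
def IsRainbowIn {V : Type*} {n : ℕ} (H : SimpleGraph V)
    (C : Fin n → Set (Sym2 V)) : Prop :=
  ∀ i : Fin n, ∀ e₁ ∈ H.edgeSet, ∀ e₂ ∈ H.edgeSet, e₁ ∈ C i → e₂ ∈ C i → e₁ = e₂

/-- A linear forest: an acyclic graph with maximum degree at most 2. -/
def IsLinearForest {V : Type*} (G : SimpleGraph V) : Prop :=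
  G.IsAcyclic ∧ ∀ v, (G.neighborSet v).ncard ≤ 2

namespace DeWerra
variable {X Y : Type*} [DecidableEq X] [DecidableEq Y]

/-- alternating trail predicate: `b = true` means the first two edges share an `X`-coordinate. -/
def altTrail : Bool → List (X × Y) → Prop
  | _, [] => True
  | _, [_] => True
  | b, e :: f :: r => (if b then e.1 = f.1 else e.2 = f.2) ∧ altTrail (!b) (f :: r)

/-- count of `p` at even (b=true) / odd (b=false) positions. -/
def cnt : Bool → List (X × Y) → X × Y → ℕ
  | _, [], _ => 0
  | b, e :: r, p => (if b then (if p = e then 1 else 0) else 0) + cnt (!b) r p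

def dXl : List (X × Y) → X → ℤ
  | [], _ => 0
  | e :: r, v => (if e.1 = v then 1 else 0) - dXl r v

def dYl : List (X × Y) → Y → ℤ
  | [], _ => 0
  | e :: r, v => (if e.2 = v then 1 else 0) - dYl r v

lemma cnt_add_cnt (l : List (X × Y)) (p : X × Y) :
    cnt true l p + cnt false l p = l.count p := by
  induction l with
  | nil => simp [cnt]
  | cons e r ih =>
    simp only [cnt, List.count_cons, Bool.not_true, Bool.not_false, if_true, if_false,
      beq_iff_eq]
    by_cases h : p = e
    · subst h; simp; omega
    · simp [h, Ne.symm h]; omega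

lemma cnt_mem_nodup : ∀ (l : List (X × Y)), l.Nodup → ∀ p : X × Y,
    cnt true l p + cnt false l p = if p ∈ l then 1 else 0 := by
  intro l
  induction l with
  | nil => intro _ p; simp [cnt]
  | cons e r ih =>
    intro hnd p
    rw [List.nodup_cons] at hnd
    have ihr := ih hnd.2 p
    simp only [cnt, Bool.not_true, Bool.not_false]
    by_cases hpe : p = e
    · subst hpe
      have hnr : p ∉ r := hnd.1
      rw [if_neg hnr] at ihr
      simp [hnr]
      omega
    · by_cases hpr : p ∈ r
      · rw [if_pos hpr] at ihr
        simp [hpe, hpr]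
        omega
      · rw [if_neg hpr] at ihr
        simp [hpe, hpr]
        omega

lemma cnt_le_count (b : Bool) (l : List (X × Y)) (p : X × Y) : cnt b l p ≤ l.count p := by
  have := cnt_add_cnt l p
  cases b <;> omega

lemma sum_indicator_pair [Fintype Y] (e : X × Y) (x : X) :
    ∑ y, (if ((x, y) : X × Y) = e then (1:ℤ) else 0) = if e.1 = x then 1 else 0 := by
  have h2 : ∀ y : Y, (if ((x,y) : X × Y) = e then (1:ℤ) else 0)
      = if x = e.1 then (if y = e.2 then (1:ℤ) else 0) else 0 := by
    intro y; by_cases h : x = e.1 <;> by_cases h' : y = e.2 <;> simp [Prod.ext_iff, h, h']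
  rw [Finset.sum_congr rfl fun y _ => h2 y]
  by_cases hx : x = e.1 <;> simp [hx, eq_comm]

lemma sum_indicator_pair' [Fintype X] (e : X × Y) (y : Y) :
    ∑ x, (if ((x, y) : X × Y) = e then (1:ℤ) else 0) = if e.2 = y then 1 else 0 := by
  have h2 : ∀ x : X, (if ((x,y) : X × Y) = e then (1:ℤ) else 0)
      = if y = e.2 then (if x = e.1 then (1:ℤ) else 0) else 0 := by
    intro x; by_cases h : y = e.2 <;> by_cases h' : x = e.1 <;> simp [Prod.ext_iff, h, h']
  rw [Finset.sum_congr rfl fun x _ => h2 x]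
  by_cases hy : y = e.2 <;> simp [hy, eq_comm]

lemma dXl_sum [Fintype Y] (l : List (X × Y)) (x : X) :
    ∑ y, ((cnt true l (x, y) : ℤ) - (cnt false l (x, y) : ℤ)) = dXl l x := by
  induction l with
  | nil => simp [cnt, dXl]
  | cons e r ih =>
    have h1 : ∀ y : Y, ((cnt true (e :: r) (x,y) : ℤ) - (cnt false (e :: r) (x,y) : ℤ))
        = (if ((x,y) : X × Y) = e then (1:ℤ) else 0)
          - ((cnt true r (x,y) : ℤ) - (cnt false r (x,y) : ℤ)) := by
      intro y; simp only [cnt, Bool.not_true, Bool.not_false, if_true, if_false]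
      push_cast; ring
    rw [Finset.sum_congr rfl fun y _ => h1 y, Finset.sum_sub_distrib, ih, sum_indicator_pair]
    simp [dXl]

lemma dYl_sum [Fintype X] (l : List (X × Y)) (y : Y) :
    ∑ x, ((cnt true l (x, y) : ℤ) - (cnt false l (x, y) : ℤ)) = dYl l y := by
  induction l with
  | nil => simp [cnt, dYl]
  | cons e r ih =>
    have h1 : ∀ x : X, ((cnt true (e :: r) (x,y) : ℤ) - (cnt false (e :: r) (x,y) : ℤ))
        = (if ((x,y) : X × Y) = e then (1:ℤ) else 0)
          - ((cnt true r (x,y) : ℤ) - (cnt false r (x,y) : ℤ)) := by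
      intro x; simp only [cnt, Bool.not_true, Bool.not_false, if_true, if_false]
      push_cast; ring
    rw [Finset.sum_congr rfl fun x _ => h1 x, Finset.sum_sub_distrib, ih, sum_indicator_pair']
    simp [dYl]

lemma dXl_eq (v : X) : ∀ (l : List (X × Y)) (b : Bool) (e q : X × Y), altTrail b l →
    l.head? = some e → l.getLast? = some q →
    dXl l v = if b then (if l.length % 2 = 1 ∧ q.1 = v then 1 else 0)
      else ((if e.1 = v then (1:ℤ) else 0) - if l.length % 2 = 0 ∧ q.1 = v then 1 else 0) := by
  intro l
  induction l with
  | nil => intro b e q _ h; simp at h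
  | cons a r ih =>
    intro b e q halt hh hq
    rw [List.head?_cons, Option.some_inj] at hh
    subst hh
    match r, halt with
    | [], _ =>
      simp only [List.getLast?_singleton, Option.some_inj] at hq
      subst hq
      cases b <;> simp [dXl]
    | f :: r', halt =>
      obtain ⟨hshare, halt'⟩ := halt
      rw [List.getLast?_cons_cons] at hq
      have ihr := ih (!b) f q halt' rfl hq
      have hlen : (a :: f :: r').length = (f :: r').length + 1 := rfl
      have hd : dXl (a :: f :: r') v = (if a.1 = v then (1:ℤ) else 0) - dXl (f :: r') v := rfl
      cases b with
      | true =>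
        rw [if_pos rfl] at hshare
        rw [if_pos rfl]
        simp only [Bool.not_true, Bool.false_eq_true, if_false] at ihr
        rw [hd, ihr, hlen]
        have he : (if f.1 = v then (1:ℤ) else 0) = (if a.1 = v then (1:ℤ) else 0) := by
          rw [hshare]
        rw [← he]
        rcases Nat.even_or_odd (f :: r').length with hpar | hpar
        · have h1 : (f :: r').length % 2 = 0 := Nat.even_iff.mp hpar
          have h2 : ((f :: r').length + 1) % 2 = 1 := by omega
          simp only [h1, h2]
          norm_num
        · have h1 : (f :: r').length % 2 = 1 := Nat.odd_iff.mp hpar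
          have h2 : ¬ ((f :: r').length + 1) % 2 = 1 := by omega
          have h3 : ¬ ((f :: r').length % 2 = 0) := by omega
          simp only [h1, h2, h3, false_and, if_false]
          try norm_num
      | false =>
        rw [if_neg Bool.false_ne_true] at hshare
        rw [if_neg Bool.false_ne_true]
        simp only [Bool.not_false, eq_self_iff_true, if_true] at ihr
        rw [hd, ihr, hlen]
        rcases Nat.even_or_odd (f :: r').length with hpar | hpar
        · have h1 : (f :: r').length % 2 = 0 := Nat.even_iff.mp hpar
          have h2 : ¬ ((f :: r').length + 1) % 2 = 0 := by omega
          have h3 : ¬ ((f :: r').length % 2 = 1) := by omega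
          simp only [h1, h2, h3, false_and, if_false]
          norm_num
        · have h1 : (f :: r').length % 2 = 1 := Nat.odd_iff.mp hpar
          have h2 : ((f :: r').length + 1) % 2 = 0 := by omega
          have h3 : ¬ ((f :: r').length % 2 = 0) := by omega
          simp only [h1, h2, h3, false_and, if_false]
          try norm_num

lemma dYl_eq (v : Y) : ∀ (l : List (X × Y)) (b : Bool) (e q : X × Y), altTrail b l →
    l.head? = some e → l.getLast? = some q →
    dYl l v = if b then ((if e.2 = v then (1:ℤ) else 0)
        - if l.length % 2 = 0 ∧ q.2 = v then 1 else 0)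
      else (if l.length % 2 = 1 ∧ q.2 = v then (1:ℤ) else 0) := by
  intro l
  induction l with
  | nil => intro b e q _ h; simp at h
  | cons a r ih =>
    intro b e q halt hh hq
    rw [List.head?_cons, Option.some_inj] at hh
    subst hh
    match r, halt with
    | [], _ =>
      simp only [List.getLast?_singleton, Option.some_inj] at hq
      subst hq
      cases b <;> simp [dYl]
    | f :: r', halt =>
      obtain ⟨hshare, halt'⟩ := halt
      rw [List.getLast?_cons_cons] at hq
      have ihr := ih (!b) f q halt' rfl hq
      have hlen : (a :: f :: r').length = (f :: r').length + 1 := rfl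
      have hd : dYl (a :: f :: r') v = (if a.2 = v then (1:ℤ) else 0) - dYl (f :: r') v := rfl
      cases b with
      | true =>
        rw [if_pos rfl]
        simp only [Bool.not_true, Bool.false_eq_true, if_false] at ihr
        rw [hd, ihr, hlen]
        rcases Nat.even_or_odd (f :: r').length with hpar | hpar
        · have h0 : (f :: r').length % 2 = 0 := Nat.even_iff.mp hpar
          have h1 : ¬ ((f :: r').length % 2 = 1) := by omega
          have h2 : ¬ (((f :: r').length + 1) % 2 = 0) := by omega
          simp only [h1, h2, false_and, if_false]
          try norm_num
        · have h1 : (f :: r').length % 2 = 1 := Nat.odd_iff.mp hpar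
          have h2 : ((f :: r').length + 1) % 2 = 0 := by omega
          simp only [h1, h2, true_and, eq_self_iff_true]
          try norm_num
      | false =>
        rw [if_neg Bool.false_ne_true] at hshare
        rw [if_neg Bool.false_ne_true]
        simp only [Bool.not_false, eq_self_iff_true, if_true] at ihr
        rw [hd, ihr, hlen]
        have he : (if f.2 = v then (1:ℤ) else 0) = (if a.2 = v then (1:ℤ) else 0) := by
          rw [hshare]
        rw [← he]
        rcases Nat.even_or_odd (f :: r').length with hpar | hpar
        · have h1 : (f :: r').length % 2 = 0 := Nat.even_iff.mp hpar
          have h2 : ((f :: r').length + 1) % 2 = 1 := by omega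
          simp only [h1, h2, true_and, eq_self_iff_true]
          try norm_num
          try ring
        · have h0 : (f :: r').length % 2 = 1 := Nat.odd_iff.mp hpar
          have h1 : ¬ ((f :: r').length % 2 = 0) := by omega
          have h2 : ¬ (((f :: r').length + 1) % 2 = 1) := by omega
          simp only [h1, h2, false_and, if_false]
          try norm_num

/-- whose turn it is to share at the appending end. -/
def xturn (b : Bool) (n : ℕ) : Prop := n % 2 = (if b then 1 else 0)

instance (b : Bool) (n : ℕ) : Decidable (xturn b n) := by unfold xturn; infer_instance

lemma altTrail_append (f : X × Y) : ∀ (l : List (X × Y)) (b : Bool) (q : X × Y),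
    altTrail b l → l.getLast? = some q →
    (if xturn b l.length then f.1 = q.1 else f.2 = q.2) →
    altTrail b (l ++ [f]) := by
  intro l
  induction l with
  | nil => intro b q _ h; simp at h
  | cons a r ih =>
    intro b q halt hq hshare
    match r, halt with
    | [], _ =>
      simp only [List.getLast?_singleton, Option.some_inj] at hq
      subst hq
      show altTrail b [a, f]
      have : (if b then a.1 = f.1 else a.2 = f.2) := by
        cases b with
        | true =>
          rw [if_pos rfl]
          rw [if_pos (by simp [xturn])] at hshare
          exact hshare.symm
        | false =>
          rw [if_neg Bool.false_ne_true]
          rw [if_neg (by simp [xturn])] at hshare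
          exact hshare.symm
      exact ⟨this, trivial⟩
    | g :: r', halt =>
      obtain ⟨hsh, halt'⟩ := halt
      rw [List.getLast?_cons_cons] at hq
      have hx : (if xturn (!b) (g :: r').length then f.1 = q.1 else f.2 = q.2) := by
        have hiff : xturn (!b) (g :: r').length ↔ xturn b (a :: g :: r').length := by
          cases b <;> simp [xturn, List.length_cons] <;> omega
        by_cases hc : xturn (!b) (g :: r').length
        · rw [if_pos hc]; rw [if_pos (hiff.mp hc)] at hshare; exact hshare
        · rw [if_neg hc]; rw [if_neg (fun h => hc (hiff.mpr h))] at hshare; exact hshare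
      have := ih (!b) q halt' hq hx
      exact ⟨hsh, this⟩

lemma altTrail_cons (g : X × Y) (l : List (X × Y)) (b : Bool) (e : X × Y)
    (halt : altTrail b l) (hh : l.head? = some e)
    (hshare : if b then g.2 = e.2 else g.1 = e.1) :
    altTrail (!b) (g :: l) := by
  match l, hh with
  | a :: r, hh =>
    rw [List.head?_cons, Option.some_inj] at hh
    subst hh
    cases b with
    | true =>
      rw [if_pos rfl] at hshare
      exact ⟨by simp [hshare], by simpa using halt⟩
    | false =>
      rw [if_neg Bool.false_ne_true] at hshare
      exact ⟨by simp [hshare], by simpa using halt⟩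

def GoodTrail (M : X × Y → ℕ) (b : Bool) (l : List (X × Y)) : Prop :=
  altTrail b l ∧ l.Nodup ∧ ∀ p ∈ l, M p = 1

lemma exists_maxTrail [Fintype X] [Fintype Y] (M : X × Y → ℕ) :
    ∀ (n : ℕ) (b : Bool) (l : List (X × Y)), GoodTrail M b l → l ≠ [] →
    Fintype.card (X × Y) + 1 - l.length ≤ n →
    ∃ (b' : Bool) (l' : List (X × Y)) (e q : X × Y), GoodTrail M b' l' ∧ l' ≠ [] ∧
      l'.head? = some e ∧ l'.getLast? = some q ∧
      (∀ f, M f = 1 → f ∉ l' → ¬(if b' then f.2 = e.2 else f.1 = e.1)) ∧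
      (∀ f, M f = 1 → f ∉ l' → ¬(if xturn b' l'.length then f.1 = q.1 else f.2 = q.2)) := by
  intro n
  induction n with
  | zero =>
    intro b l hg hne hlen
    exfalso
    have := List.Nodup.length_le_card hg.2.1
    omega
  | succ n ih =>
    intro b l hg hne hlen
    obtain ⟨e, he⟩ : ∃ e, l.head? = some e := by
      cases l with
      | nil => exact absurd rfl hne
      | cons a r => exact ⟨a, rfl⟩
    obtain ⟨q, hq⟩ : ∃ q, l.getLast? = some q := by
      rw [List.getLast?_eq_getLast hne]; exact ⟨_, rfl⟩
    by_cases hend : ∃ f, M f = 1 ∧ f ∉ l ∧ (if xturn b l.length then f.1 = q.1 else f.2 = q.2)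
    · obtain ⟨f, hf1, hf2, hf3⟩ := hend
      have halt' : altTrail b (l ++ [f]) := altTrail_append f l b q hg.1 hq hf3
      have hnd : (l ++ [f]).Nodup := by
        rw [List.nodup_append]
        refine ⟨hg.2.1, List.nodup_singleton f, ?_⟩
        intro a ha b hb hab
        rw [List.mem_singleton] at hb
        subst hb; subst hab; exact hf2 ha
      have hmem : ∀ p ∈ l ++ [f], M p = 1 := by
        intro p hp
        rcases List.mem_append.mp hp with h | h
        · exact hg.2.2 p h
        · rw [List.mem_singleton] at h; subst h; exact hf1
      exact ih b (l ++ [f]) ⟨halt', hnd, hmem⟩ (by simp)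
        (by rw [List.length_append, List.length_singleton]; omega)
    · by_cases hstart : ∃ g, M g = 1 ∧ g ∉ l ∧ (if b then g.2 = e.2 else g.1 = e.1)
      · obtain ⟨g, hg1, hg2, hg3⟩ := hstart
        have halt' := altTrail_cons g l b e hg.1 he hg3
        have hnd : (g :: l).Nodup := List.nodup_cons.mpr ⟨hg2, hg.2.1⟩
        have hmem : ∀ p ∈ g :: l, M p = 1 := by
          intro p hp
          rcases List.mem_cons.mp hp with h | h
          · subst h; exact hg1
          · exact hg.2.2 p h
        exact ih (!b) (g :: l) ⟨halt', hnd, hmem⟩ (by simp)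
          (by rw [List.length_cons]; omega)
      · exact ⟨b, l, e, q, hg, hne, he, hq,
          fun f h1 h2 hc => hstart ⟨f, h1, h2, hc⟩,
          fun f h1 h2 hc => hend ⟨f, h1, h2, hc⟩⟩

lemma split [Fintype X] [Fintype Y] : ∀ (n : ℕ) (M : X × Y → ℕ), (∑ p, M p) < n →
    ∃ A B : X × Y → ℕ,
      (∀ p, A p + B p = M p) ∧
      (∀ p, |(A p : ℤ) - (B p : ℤ)| ≤ 1) ∧
      (∀ x, |∑ y, ((A (x, y) : ℤ) - (B (x, y) : ℤ))| ≤ 1) ∧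
      (∀ y, |∑ x, ((A (x, y) : ℤ) - (B (x, y) : ℤ))| ≤ 1) := by
  intro n
  induction n with
  | zero => intro M h; exact absurd h (Nat.not_lt_zero _)
  | succ n ih =>
    intro M hM
    by_cases h2 : ∃ p0, 2 ≤ M p0
    · obtain ⟨p0, hp0⟩ := h2
      set M' : X × Y → ℕ := fun p => if p = p0 then M p - 2 else M p with hM'
      have hM'p0 : M' p0 = M p0 - 2 := by simp [hM']
      have hsum' : ∑ p, M' p + 2 = ∑ p, M p := by
        have h1 := Finset.add_sum_erase Finset.univ M' (Finset.mem_univ p0)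
        have h2' := Finset.add_sum_erase Finset.univ M (Finset.mem_univ p0)
        have h3 : ∑ p ∈ Finset.univ.erase p0, M' p = ∑ p ∈ Finset.univ.erase p0, M p :=
          Finset.sum_congr rfl (fun p hp => by
            simp [hM', (Finset.mem_erase.mp hp).1])
        omega
      obtain ⟨A', B', hs, hp, hr, hc⟩ := ih M' (by omega)
      refine ⟨fun p => A' p + (if p = p0 then 1 else 0),
        fun p => B' p + (if p = p0 then 1 else 0), ?_, ?_, ?_, ?_⟩
      · intro p
        have h4 := hs p
        by_cases h : p = p0
        · subst h; simp only [eq_self_iff_true, if_true]; omega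
        · have h5 : M' p = M p := by simp [hM', h]
          simp only [h, if_false]; omega
      · intro p
        have heq : ((A' p + (if p = p0 then 1 else 0) : ℕ) : ℤ)
            - ((B' p + (if p = p0 then 1 else 0) : ℕ) : ℤ) = (A' p : ℤ) - B' p := by
          push_cast; ring
        rw [heq]; exact hp p
      · intro x
        have heq : ∀ y : Y, ((A' (x,y) + (if (x,y) = p0 then 1 else 0) : ℕ) : ℤ)
            - ((B' (x,y) + (if (x,y) = p0 then 1 else 0) : ℕ) : ℤ)
            = (A' (x,y) : ℤ) - B' (x,y) := by
          intro y; push_cast; ring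
        rw [Finset.sum_congr rfl fun y _ => heq y]; exact hr x
      · intro y
        have heq : ∀ x : X, ((A' (x,y) + (if (x,y) = p0 then 1 else 0) : ℕ) : ℤ)
            - ((B' (x,y) + (if (x,y) = p0 then 1 else 0) : ℕ) : ℤ)
            = (A' (x,y) : ℤ) - B' (x,y) := by
          intro x; push_cast; ring
        rw [Finset.sum_congr rfl fun x _ => heq x]; exact hc y
    · push_neg at h2
      by_cases hE : ∃ e, M e = 1
      · obtain ⟨e0, he0⟩ := hE
        have hgood : GoodTrail M true [e0] := ⟨trivial, List.nodup_singleton _, by simp [he0]⟩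
        obtain ⟨b, l, e, q, hg, hne, hh, hq, hsmax, hemax⟩ :=
          exists_maxTrail M (Fintype.card (X × Y) + 1) true [e0] hgood (by simp) (by simp)
        set M' : X × Y → ℕ := fun p => if p ∈ l then 0 else M p with hM'
        have hM'le : ∀ p, M' p ≤ M p := fun p => by simp only [hM']; split <;> omega
        have hel : e ∈ l := List.mem_of_mem_head? hh
        have hdec : ∑ p, M' p < ∑ p, M p := by
          apply Finset.sum_lt_sum (fun p _ => hM'le p)
          refine ⟨e, Finset.mem_univ e, ?_⟩
          have h1 : M' e = 0 := by simp [hM', hel]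
          have h2' : M e = 1 := hg.2.2 e hel
          omega
        obtain ⟨A', B', hs, hp, hr, hc⟩ := ih M' (by omega)
        have hsum2 : ∀ p, (A' p + cnt true l p) + (B' p + cnt false l p) = M p := by
          intro p
          have hcc := cnt_mem_nodup l hg.2.1 p
          have h4 := hs p
          by_cases hpl : p ∈ l
          · have h1 : M' p = 0 := by simp [hM', hpl]
            have h2' : M p = 1 := hg.2.2 p hpl
            rw [if_pos hpl] at hcc
            omega
          · have h1 : M' p = M p := by simp [hM', hpl]
            rw [if_neg hpl] at hcc
            omega
        -- all M'-values on row/col where d ≠ 0 vanish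
        have hzero : ∀ p : X × Y, M' p = 0 → (A' p : ℤ) - B' p = 0 := by
          intro p h0
          have h4 := hs p
          have : A' p = 0 ∧ B' p = 0 := by omega
          rw [this.1, this.2]; simp
        refine ⟨fun p => A' p + cnt true l p, fun p => B' p + cnt false l p,
          hsum2, ?_, ?_, ?_⟩
        · intro p
          have h4 := hsum2 p
          have h5 := h2 p
          rw [abs_le]; push_cast; omega
        · intro x
          have hrow : ∑ y, (((A' (x,y) + cnt true l (x,y) : ℕ) : ℤ)
              - ((B' (x,y) + cnt false l (x,y) : ℕ) : ℤ))
              = (∑ y, ((A' (x,y) : ℤ) - B' (x,y))) + dXl l x := by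
            rw [← dXl_sum l x, ← Finset.sum_add_distrib]
            exact Finset.sum_congr rfl fun y _ => by push_cast; ring
          rw [hrow]
          have hdx := dXl_eq x l b e q hg.1 hh hq
          have hkey : dXl l x = 0 ∨
              ((-1 ≤ dXl l x ∧ dXl l x ≤ 1) ∧ ∀ f, M f = 1 → f ∉ l → f.1 ≠ x) := by
            cases b with
            | true =>
              rw [if_pos rfl] at hdx
              by_cases hcnd : l.length % 2 = 1 ∧ q.1 = x
              · refine Or.inr ⟨by rw [hdx, if_pos hcnd]; omega, ?_⟩
                intro f hf1 hf2 hfx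
                have hx : xturn true l.length := by unfold xturn; simp [hcnd.1]
                exact hemax f hf1 hf2 (by rw [if_pos hx]; rw [hfx, hcnd.2])
              · exact Or.inl (by rw [hdx, if_neg hcnd])
            | false =>
              rw [if_neg Bool.false_ne_true] at hdx
              by_cases h1 : e.1 = x
              · refine Or.inr ⟨by rw [hdx]; split <;> split <;> omega, ?_⟩
                intro f hf1 hf2 hfx
                exact hsmax f hf1 hf2 (by rw [if_neg Bool.false_ne_true]; rw [hfx, h1])
              · by_cases hcnd : l.length % 2 = 0 ∧ q.1 = x
                · refine Or.inr ⟨by rw [hdx, if_neg h1, if_pos hcnd]; omega, ?_⟩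
                  intro f hf1 hf2 hfx
                  have hx : xturn false l.length := by unfold xturn; simp [hcnd.1]
                  exact hemax f hf1 hf2 (by rw [if_pos hx]; rw [hfx, hcnd.2])
                · exact Or.inl (by rw [hdx, if_neg h1, if_neg hcnd]; ring)
          rcases hkey with h0 | ⟨hb1, hall⟩
          · rw [h0, add_zero]; exact hr x
          · have hS : ∑ y, ((A' (x,y) : ℤ) - B' (x,y)) = 0 := by
              apply Finset.sum_eq_zero
              intro y _
              apply hzero
              by_cases hmem : ((x,y) : X × Y) ∈ l
              · simp [hM', hmem]
              · have hm1 : M (x,y) ≤ 1 := by have := h2 (x,y); omega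
                have : M (x,y) = 0 := by
                  rcases Nat.lt_or_ge (M (x,y)) 1 with h | h
                  · omega
                  · exact absurd rfl (hall (x,y) (by omega) hmem)
                simp [hM', hmem, this]
            rw [hS, zero_add, abs_le]; exact ⟨hb1.1, hb1.2⟩
        · intro y
          have hcol : ∑ x, (((A' (x,y) + cnt true l (x,y) : ℕ) : ℤ)
              - ((B' (x,y) + cnt false l (x,y) : ℕ) : ℤ))
              = (∑ x, ((A' (x,y) : ℤ) - B' (x,y))) + dYl l y := by
            rw [← dYl_sum l y, ← Finset.sum_add_distrib]
            exact Finset.sum_congr rfl fun x _ => by push_cast; ring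
          rw [hcol]
          have hdy := dYl_eq y l b e q hg.1 hh hq
          have hkey : dYl l y = 0 ∨
              ((-1 ≤ dYl l y ∧ dYl l y ≤ 1) ∧ ∀ f, M f = 1 → f ∉ l → f.2 ≠ y) := by
            cases b with
            | true =>
              rw [if_pos rfl] at hdy
              by_cases h1 : e.2 = y
              · refine Or.inr ⟨by rw [hdy]; split <;> split <;> omega, ?_⟩
                intro f hf1 hf2 hfy
                exact hsmax f hf1 hf2 (by rw [if_pos rfl]; rw [hfy, h1])
              · by_cases hcnd : l.length % 2 = 0 ∧ q.2 = y
                · refine Or.inr ⟨by rw [hdy, if_neg h1, if_pos hcnd]; omega, ?_⟩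
                  intro f hf1 hf2 hfy
                  have hx : ¬ xturn true l.length := by
                    have h0 := hcnd.1
                    intro hcon; unfold xturn at hcon; simp at hcon; omega
                  exact hemax f hf1 hf2 (by rw [if_neg hx]; rw [hfy, hcnd.2])
                · exact Or.inl (by rw [hdy, if_neg h1, if_neg hcnd]; ring)
            | false =>
              rw [if_neg Bool.false_ne_true] at hdy
              by_cases hcnd : l.length % 2 = 1 ∧ q.2 = y
              · refine Or.inr ⟨by rw [hdy, if_pos hcnd]; omega, ?_⟩
                intro f hf1 hf2 hfy
                have hx : ¬ xturn false l.length := by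
                  have h0 := hcnd.1
                  intro hcon; unfold xturn at hcon; simp at hcon; omega
                exact hemax f hf1 hf2 (by rw [if_neg hx]; rw [hfy, hcnd.2])
              · exact Or.inl (by rw [hdy, if_neg hcnd])
          rcases hkey with h0 | ⟨hb1, hall⟩
          · rw [h0, add_zero]; exact hc y
          · have hS : ∑ x, ((A' (x,y) : ℤ) - B' (x,y)) = 0 := by
              apply Finset.sum_eq_zero
              intro x _
              apply hzero
              by_cases hmem : ((x,y) : X × Y) ∈ l
              · simp [hM', hmem]
              · have : M (x,y) = 0 := by
                  rcases Nat.lt_or_ge (M (x,y)) 1 with h | h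
                  · omega
                  · exact absurd rfl (hall (x,y) (by have := h2 (x,y); omega) hmem)
                simp [hM', hmem, this]
            rw [hS, zero_add, abs_le]; exact ⟨hb1.1, hb1.2⟩
      · push_neg at hE
        have hz : ∀ p, M p = 0 := fun p => by have := h2 p; have := hE p; omega
        exact ⟨fun _ => 0, fun _ => 0, fun p => by simp [hz p], by simp, by simp, by simp⟩

lemma sq_bal_int {a b c d : ℤ} (h1 : a + b = c + d) (h2 : |a - b| ≤ 1) :
    a^2 + b^2 ≤ c^2 + d^2 := by
  rw [abs_le] at h2
  have key : (a-b)^2 ≤ (c-d)^2 := by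
    by_cases h : c - d = 0
    · have hab : a - b = 0 := by omega
      rw [hab, h]
    · have h4 : (a-b)^2 ≤ 1 := by nlinarith [h2.1, h2.2]
      have h5 : 1 ≤ (c-d)^2 := by
        rcases lt_or_gt_of_ne h with hh | hh <;> nlinarith
      linarith
  have hid : 2*(a^2+b^2) = (a+b)^2 + (a-b)^2 := by ring
  have hid2 : 2*(c^2+d^2) = (c+d)^2 + (c-d)^2 := by ring
  rw [h1] at hid
  linarith [key, hid, hid2]

lemma sq_bal_int_lt {a b c d : ℤ} (h1 : a + b = c + d) (h2 : |a - b| ≤ 1)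
    (h3 : 2 ≤ |c - d|) : a^2 + b^2 < c^2 + d^2 := by
  rw [abs_le] at h2
  have h4 : (a-b)^2 ≤ 1 := by nlinarith [h2.1, h2.2]
  have h5 : 4 ≤ (c-d)^2 := by
    rcases abs_cases (c - d) with ⟨he, _⟩ | ⟨he, _⟩ <;> nlinarith [h3]
  have hid : 2*(a^2+b^2) = (a+b)^2 + (a-b)^2 := by ring
  have hid2 : 2*(c^2+d^2) = (c+d)^2 + (c-d)^2 := by ring
  rw [h1] at hid
  linarith [h4, h5, hid, hid2]

lemma sq_bal_nat {a b c d : ℕ} (h1 : a + b = c + d) (h2 : |(a:ℤ) - b| ≤ 1) :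
    a^2 + b^2 ≤ c^2 + d^2 := by
  zify
  exact sq_bal_int (by exact_mod_cast congrArg (fun t : ℕ => (t : ℤ)) h1) h2

lemma sq_bal_nat_lt {a b c d : ℕ} (h1 : a + b = c + d) (h2 : |(a:ℤ) - b| ≤ 1)
    (h3 : 2 ≤ |(c:ℤ) - d|) : a^2 + b^2 < c^2 + d^2 := by
  zify
  exact sq_bal_int_lt (by exact_mod_cast congrArg (fun t : ℕ => (t : ℤ)) h1) h2 h3

section Potential
variable [Fintype X] [Fintype Y]

def pot (N : X × Y → ℕ) : ℕ :=
  ∑ p, (N p)^2 + ∑ x, (∑ y, N (x, y))^2 + ∑ y, (∑ x, N (x, y))^2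

def Balanced {k : ℕ} (Mc : Fin k → X × Y → ℕ) : Prop :=
  (∀ x : X, ∀ i j : Fin k,
    |(∑ y, (Mc i (x, y) : ℤ)) - ∑ y, (Mc j (x, y) : ℤ)| ≤ 1) ∧
  (∀ y : Y, ∀ i j : Fin k,
    |(∑ x, (Mc i (x, y) : ℤ)) - ∑ x, (Mc j (x, y) : ℤ)| ≤ 1) ∧
  (∀ p : X × Y, ∀ i j : Fin k, |(Mc i p : ℤ) - (Mc j p : ℤ)| ≤ 1)

lemma hdiffcast_row (F G : X × Y → ℕ) (x : X) :
    ∑ y, ((F (x,y) : ℤ) - (G (x,y) : ℤ))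
      = ((∑ y, F (x,y) : ℕ) : ℤ) - ((∑ y, G (x,y) : ℕ) : ℤ) := by
  rw [Finset.sum_sub_distrib]; push_cast; ring

lemma hdiffcast_col (F G : X × Y → ℕ) (y : Y) :
    ∑ x, ((F (x,y) : ℤ) - (G (x,y) : ℤ))
      = ((∑ x, F (x,y) : ℕ) : ℤ) - ((∑ x, G (x,y) : ℕ) : ℤ) := by
  rw [Finset.sum_sub_distrib]; push_cast; ring

lemma pot_pair_lt (A B C D : X × Y → ℕ)
    (hsum : ∀ p, A p + B p = C p + D p)
    (hpair : ∀ p, |(A p : ℤ) - (B p : ℤ)| ≤ 1)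
    (hrow : ∀ x, |∑ y, ((A (x, y) : ℤ) - (B (x, y) : ℤ))| ≤ 1)
    (hcol : ∀ y, |∑ x, ((A (x, y) : ℤ) - (B (x, y) : ℤ))| ≤ 1)
    (hw : (∃ p, 2 ≤ |(C p : ℤ) - (D p : ℤ)|)
      ∨ (∃ x, 2 ≤ |∑ y, ((C (x, y) : ℤ) - (D (x, y) : ℤ))|)
      ∨ (∃ y, 2 ≤ |∑ x, ((C (x, y) : ℤ) - (D (x, y) : ℤ))|)) :
    pot A + pot B < pot C + pot D := by
  have hrowsum : ∀ x, (∑ y, A (x,y)) + (∑ y, B (x,y)) = (∑ y, C (x,y)) + (∑ y, D (x,y)) := by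
    intro x
    rw [← Finset.sum_add_distrib, ← Finset.sum_add_distrib]
    exact Finset.sum_congr rfl fun y _ => hsum (x,y)
  have hcolsum : ∀ y, (∑ x, A (x,y)) + (∑ x, B (x,y)) = (∑ x, C (x,y)) + (∑ x, D (x,y)) := by
    intro y
    rw [← Finset.sum_add_distrib, ← Finset.sum_add_distrib]
    exact Finset.sum_congr rfl fun x _ => hsum (x,y)
  have e1 : ∀ p : X × Y, A p ^2 + B p ^2 ≤ C p ^2 + D p ^2 :=
    fun p => sq_bal_nat (hsum p) (hpair p)
  have e2 : ∀ x, (∑ y, A (x,y))^2 + (∑ y, B (x,y))^2 ≤ (∑ y, C (x,y))^2 + (∑ y, D (x,y))^2 := by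
    intro x
    exact sq_bal_nat (hrowsum x) (by rw [← hdiffcast_row A B x]; exact hrow x)
  have e3 : ∀ y, (∑ x, A (x,y))^2 + (∑ x, B (x,y))^2 ≤ (∑ x, C (x,y))^2 + (∑ x, D (x,y))^2 := by
    intro y
    exact sq_bal_nat (hcolsum y) (by rw [← hdiffcast_col A B y]; exact hcol y)
  have s1 : ∑ p : X × Y, (A p^2 + B p^2) ≤ ∑ p : X × Y, (C p^2 + D p^2) :=
    Finset.sum_le_sum fun p _ => e1 p
  have s2 : ∑ x, ((∑ y, A (x,y))^2 + (∑ y, B (x,y))^2)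
      ≤ ∑ x, ((∑ y, C (x,y))^2 + (∑ y, D (x,y))^2) :=
    Finset.sum_le_sum fun x _ => e2 x
  have s3 : ∑ y, ((∑ x, A (x,y))^2 + (∑ x, B (x,y))^2)
      ≤ ∑ y, ((∑ x, C (x,y))^2 + (∑ x, D (x,y))^2) :=
    Finset.sum_le_sum fun y _ => e3 y
  have hcomb : ∀ F G : X × Y → ℕ, pot F + pot G
      = ∑ p : X × Y, (F p^2 + G p^2) + ∑ x, ((∑ y, F (x,y))^2 + (∑ y, G (x,y))^2)
        + ∑ y, ((∑ x, F (x,y))^2 + (∑ x, G (x,y))^2) := by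
    intro F G
    unfold pot
    rw [Finset.sum_add_distrib, Finset.sum_add_distrib, Finset.sum_add_distrib]
    ring
  rw [hcomb A B, hcomb C D]
  rcases hw with ⟨p0, hp0⟩ | ⟨x0, hx0⟩ | ⟨y0, hy0⟩
  · have s1' : ∑ p : X × Y, (A p^2 + B p^2) < ∑ p : X × Y, (C p^2 + D p^2) :=
      Finset.sum_lt_sum (fun p _ => e1 p)
        ⟨p0, Finset.mem_univ _, sq_bal_nat_lt (hsum p0) (hpair p0) hp0⟩
    omega
  · rw [hdiffcast_row C D x0] at hx0
    have s2' : ∑ x, ((∑ y, A (x,y))^2 + (∑ y, B (x,y))^2)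
        < ∑ x, ((∑ y, C (x,y))^2 + (∑ y, D (x,y))^2) :=
      Finset.sum_lt_sum (fun x _ => e2 x)
        ⟨x0, Finset.mem_univ _, sq_bal_nat_lt (hrowsum x0)
          (by rw [← hdiffcast_row A B x0]; exact hrow x0) hx0⟩
    omega
  · rw [hdiffcast_col C D y0] at hy0
    have s3' : ∑ y, ((∑ x, A (x,y))^2 + (∑ x, B (x,y))^2)
        < ∑ y, ((∑ x, C (x,y))^2 + (∑ x, D (x,y))^2) :=
      Finset.sum_lt_sum (fun y _ => e3 y)
        ⟨y0, Finset.mem_univ _, sq_bal_nat_lt (hcolsum y0)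
          (by rw [← hdiffcast_col A B y0]; exact hcol y0) hy0⟩
    omega

end Potential

section Main
variable [Fintype X] [Fintype Y]

lemma step {k : ℕ} (Mc : Fin k → X × Y → ℕ) (h : ¬ Balanced Mc) :
    ∃ Mc' : Fin k → X × Y → ℕ,
      (∀ p, ∑ i, Mc' i p = ∑ i, Mc i p) ∧ (∑ i, pot (Mc' i)) < ∑ i, pot (Mc i) := by
  obtain ⟨i, j, hij, hw⟩ : ∃ i j : Fin k, i ≠ j ∧
      ((∃ p, 2 ≤ |(Mc i p : ℤ) - (Mc j p : ℤ)|)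
      ∨ (∃ x, 2 ≤ |∑ y, ((Mc i (x, y) : ℤ) - (Mc j (x, y) : ℤ))|)
      ∨ (∃ y, 2 ≤ |∑ x, ((Mc i (x, y) : ℤ) - (Mc j (x, y) : ℤ))|)) := by
    rcases not_and_or.mp h with h1 | h1
    · push_neg at h1
      obtain ⟨x, i, j, hgt⟩ := h1
      have hne : i ≠ j := by
        rintro rfl
        simp [sub_self] at hgt
      refine ⟨i, j, hne, Or.inr (Or.inl ⟨x, ?_⟩)⟩
      rw [Finset.sum_sub_distrib]
      linarith
    · rcases not_and_or.mp h1 with h2 | h2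
      · push_neg at h2
        obtain ⟨y, i, j, hgt⟩ := h2
        have hne : i ≠ j := by
          rintro rfl
          simp [sub_self] at hgt
        refine ⟨i, j, hne, Or.inr (Or.inr ⟨y, ?_⟩)⟩
        rw [Finset.sum_sub_distrib]
        linarith
      · push_neg at h2
        obtain ⟨p, i, j, hgt⟩ := h2
        have hne : i ≠ j := by
          rintro rfl
          simp [sub_self] at hgt
        exact ⟨i, j, hne, Or.inl ⟨p, by linarith⟩⟩
  classical
  set N : X × Y → ℕ := fun p => Mc i p + Mc j p with hN
  obtain ⟨A, B, hs, hpp, hrr, hcc⟩ := split (∑ p, N p + 1) N (Nat.lt_succ_self _)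
  have hs' : ∀ p, A p + B p = Mc i p + Mc j p := fun p => by
    have := hs p; simp only [hN] at this; exact this
  set Mc' : Fin k → X × Y → ℕ :=
    fun l => if l = i then A else if l = j then B else Mc l with hMc'
  have hMi : Mc' i = A := by simp [hMc']
  have hMj : Mc' j = B := by simp [hMc', Ne.symm hij]
  have hMo : ∀ l, l ≠ i → l ≠ j → Mc' l = Mc l := fun l h1 h2 => by simp [hMc', h1, h2]
  have hji : j ∈ Finset.univ.erase i := Finset.mem_erase.mpr ⟨Ne.symm hij, Finset.mem_univ _⟩
  have hdecomp : ∀ (f : Fin k → ℕ),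
      ∑ l, f l = f i + (f j + ∑ l ∈ (Finset.univ.erase i).erase j, f l) := by
    intro f
    rw [← Finset.add_sum_erase _ f (Finset.mem_univ i), ← Finset.add_sum_erase _ f hji]
  have hrest : ∀ l ∈ (Finset.univ.erase i).erase j, Mc' l = Mc l := by
    intro l hl
    have h1 := Finset.mem_erase.mp hl
    have h2 := Finset.mem_erase.mp h1.2
    exact hMo l h2.1 h1.1
  refine ⟨Mc', ?_, ?_⟩
  · intro p
    rw [hdecomp (fun l => Mc' l p), hdecomp (fun l => Mc l p)]
    have h3 : ∑ l ∈ (Finset.univ.erase i).erase j, Mc' l p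
        = ∑ l ∈ (Finset.univ.erase i).erase j, Mc l p :=
      Finset.sum_congr rfl fun l hl => by rw [hrest l hl]
    have h4 := hs' p
    have h5 : Mc' i p = A p := by rw [hMi]
    have h6 : Mc' j p = B p := by rw [hMj]
    omega
  · rw [hdecomp (fun l => pot (Mc' l)), hdecomp (fun l => pot (Mc l))]
    have h3 : ∑ l ∈ (Finset.univ.erase i).erase j, pot (Mc' l)
        = ∑ l ∈ (Finset.univ.erase i).erase j, pot (Mc l) :=
      Finset.sum_congr rfl fun l hl => by rw [hrest l hl]
    have hlt : pot A + pot B < pot (Mc i) + pot (Mc j) :=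
      pot_pair_lt A B (Mc i) (Mc j) hs' hpp hrr hcc hw
    rw [hMi, hMj]
    omega

lemma exists_balanced {k : ℕ} : ∀ (n : ℕ) (Mc : Fin k → X × Y → ℕ),
    (∑ i, pot (Mc i)) < n →
    ∃ Mc' : Fin k → X × Y → ℕ, (∀ p, ∑ i, Mc' i p = ∑ i, Mc i p) ∧ Balanced Mc' := by
  intro n
  induction n with
  | zero => intro Mc h; exact absurd h (Nat.not_lt_zero _)
  | succ n ih =>
    intro Mc hn
    by_cases hb : Balanced Mc
    · exact ⟨Mc, fun p => rfl, hb⟩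
    · obtain ⟨Mc'', hsum, hlt⟩ := step Mc hb
      obtain ⟨Mc', h1, h2⟩ := ih Mc'' (by omega)
      exact ⟨Mc', fun p => (h1 p).trans (hsum p), h2⟩

end Main
end DeWerra

theorem deWerra_balanced_coloring {X Y : Type*} [Fintype X] [Fintype Y]
    (M : X × Y → ℕ) (k : ℕ) (hk : 0 < k) :
    ∃ Mc : Fin k → X × Y → ℕ,
      (∀ p : X × Y, ∑ i, Mc i p = M p) ∧
      (∀ x : X, ∀ i j : Fin k,
        |(∑ y, (Mc i (x, y) : ℤ)) - ∑ y, (Mc j (x, y) : ℤ)| ≤ 1) ∧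
      (∀ y : Y, ∀ i j : Fin k,
        |(∑ x, (Mc i (x, y) : ℤ)) - ∑ x, (Mc j (x, y) : ℤ)| ≤ 1) ∧
      (∀ p : X × Y, ∀ i j : Fin k, |(Mc i p : ℤ) - (Mc j p : ℤ)| ≤ 1) := by
  classical
  set i0 : Fin k := ⟨0, hk⟩ with hi0
  set Mc0 : Fin k → X × Y → ℕ := fun i p => if i = i0 then M p else 0 with hMc0
  have hsum0 : ∀ p, ∑ i, Mc0 i p = M p := by
    intro p
    simp [hMc0, Finset.sum_ite_eq']
  obtain ⟨Mc', hs', hb⟩ := DeWerra.exists_balanced (∑ i, DeWerra.pot (Mc0 i) + 1) Mc0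
    (Nat.lt_succ_self _)
  exact ⟨Mc', fun p => (hs' p).trans (hsum0 p), hb.1, hb.2.1, hb.2.2⟩
end

section
/- (Hilton) Let X and Y be finite sets and let E be a finite set of edges of a bipartite multigraph with parts X and Y, given by endpoint maps μ_X : E → X and μ_Y : E → Y, such that for every y ∈ Y the number of edges e with μ_Y(e) = y is even. Let P be a pairing of the edges on X: a collection of pairwise disjoint two-element subsets {e_1, e_2} of E with μ_X(e_1) = μ_X(e_2), satisfying the condition that for every x ∈ X and y ∈ Y, at most one edge e with μ_X(e) = x and μ_Y(e) = y is paired in P with an edge e' having μ_Y(e') ≠ y. Then there exists a coloring c : E → {1, 2} such that: (a) for every x ∈ X, the numbers of edges at x of color 1 and of color 2 differ by at most 1; (b) for every y ∈ Y, the numbers of edges at y of color 1 and of color 2 differ by at most 1; (c) for every pair (x,y) ∈ X × Y, the numbers of edges e with μ_X(e) = x, μ_Y(e) = y of color 1 and of color 2 differ by at most 1; and (d) whenever {e_1, e_2} ∈ P, the edges e_1 and e_2 receive different colors. -/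
open SimpleGraph

set_option linter.unusedSectionVars false


section pairing
variable {E : Type*} [DecidableEq E]

/-- Any finset can be paired up leaving at most one element unpaired. -/
lemma exists_pairing (s : Finset E) :
    ∃ p : E → E, (∀ e, p (p e) = e) ∧ (∀ e ∉ s, p e = e) ∧ (∀ e ∈ s, p e ∈ s) ∧
      (s.filter (fun e => p e = e)).card ≤ 1 := by
  suffices H : ∀ (n : ℕ) (s : Finset E), s.card = n → ∃ p : E → E, (∀ e, p (p e) = e) ∧
      (∀ e ∉ s, p e = e) ∧ (∀ e ∈ s, p e ∈ s) ∧
      (s.filter (fun e => p e = e)).card ≤ 1 from H s.card s rfl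
  intro n
  induction n using Nat.strong_induction_on with
  | _ n ih =>
  intro s hn
  rcases le_or_gt s.card 1 with hle | hlt
  · refine ⟨id, fun e => rfl, fun e _ => rfl, fun e he => he, ?_⟩
    simpa using hle
  · obtain ⟨a, ha, b, hb, hab⟩ := Finset.one_lt_card.mp hlt
    set s' := (s.erase a).erase b with hs'
    have hcard : s'.card < n := by
      subst hn
      have : s'.card ≤ (s.erase a).card := Finset.card_erase_le
      have h2 : (s.erase a).card < s.card := Finset.card_erase_lt_of_mem ha
      omega
    obtain ⟨p', hp'inv, hp'out, hp'in, hp'fix⟩ := ih s'.card hcard s' rfl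
    have has' : a ∉ s' := by simp [hs']
    have hbs' : b ∉ s' := by simp [hs']
    refine ⟨fun e => if e = a then b else if e = b then a else p' e, ?_, ?_, ?_, ?_⟩
    · intro e
      by_cases hea : e = a
      · simp [hea, hab.symm, Ne.symm hab]
      by_cases heb : e = b
      · simp [heb, hab, Ne.symm hab]
      · simp only [if_neg hea, if_neg heb]
        by_cases hes' : e ∈ s'
        · have h1 : p' e ∈ s' := hp'in e hes'
          have h2 : p' e ≠ a := fun h => has' (h ▸ h1)
          have h3 : p' e ≠ b := fun h => hbs' (h ▸ h1)
          simp [h2, h3, hp'inv e]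
        · rw [hp'out e hes']
          simp [hea, heb, hp'out e hes']
    · intro e he
      have hea : e ≠ a := fun h => he (h ▸ ha)
      have heb : e ≠ b := fun h => he (h ▸ hb)
      have hes' : e ∉ s' := fun h => he (Finset.mem_of_mem_erase (Finset.mem_of_mem_erase h))
      simp [hea, heb, hp'out e hes']
    · intro e he
      by_cases hea : e = a
      · simp [hea, hb]
      by_cases heb : e = b
      · simp [heb, Ne.symm hab, ha]
      · simp only [if_neg hea, if_neg heb]
        by_cases hes' : e ∈ s'
        · exact Finset.mem_of_mem_erase (Finset.mem_of_mem_erase (hp'in e hes'))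
        · rw [hp'out e hes']; exact he
    · have hsub : s.filter (fun e => (if e = a then b else if e = b then a else p' e) = e)
          ⊆ s'.filter (fun e => p' e = e) := by
        intro e he
        simp only [Finset.mem_filter] at he
        obtain ⟨he1, he2⟩ := he
        by_cases hea : e = a
        · rw [if_pos hea] at he2; exact absurd (he2.trans hea) (Ne.symm hab)
        by_cases heb : e = b
        · rw [if_neg hea, if_pos heb] at he2; exact absurd (heb.symm.trans he2.symm).symm hab
        · rw [if_neg hea, if_neg heb] at he2
          refine Finset.mem_filter.mpr ⟨?_, he2⟩
          exact Finset.mem_erase.mpr ⟨heb, Finset.mem_erase.mpr ⟨hea, he1⟩⟩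
      exact le_trans (Finset.card_le_card hsub) hp'fix
end pairing

lemma combine {E K : Type*} [DecidableEq E] [Fintype E] (ν : E → K)
    (b : E → E) (hb : ∀ e, b (b e) = e) (hbν : ∀ e, ν (b e) = ν e) :
    ∃ p : E → E, (∀ e, p (p e) = e) ∧ (∀ e, ν (p e) = ν e) ∧
      (∀ e, b e ≠ e → p e = b e) ∧
      (∀ k : K, ({e : E | ν e = k ∧ p e = e}).Subsingleton) := by
  classical
  have H : ∀ k : K, ∃ p : E → E, (∀ e, p (p e) = e) ∧
      (∀ e ∉ (Finset.univ.filter (fun e => ν e = k ∧ b e = e)), p e = e) ∧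
      (∀ e ∈ (Finset.univ.filter (fun e => ν e = k ∧ b e = e)), p e ∈
        (Finset.univ.filter (fun e => ν e = k ∧ b e = e))) ∧
      ((Finset.univ.filter (fun e => ν e = k ∧ b e = e)).filter (fun e => p e = e)).card ≤ 1 :=
    fun k => exists_pairing _
  choose q hqinv hqout hqin hqfix using H
  -- membership facts
  have hmem : ∀ e, e ∈ Finset.univ.filter (fun e' => ν e' = ν e ∧ b e' = e') ↔ b e = e := by
    intro e; simp
  refine ⟨fun e => if b e = e then q (ν e) e else b e, ?_, ?_, ?_, ?_⟩
  · intro e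
    by_cases hbe : b e = e
    · simp only [if_pos hbe]
      have hes : e ∈ Finset.univ.filter (fun e' => ν e' = ν e ∧ b e' = e') := (hmem e).mpr hbe
      have h1 := hqin (ν e) e hes
      simp only [Finset.mem_filter] at h1
      rw [if_pos h1.2.2, h1.2.1, hqinv (ν e) e]
    · simp only [if_neg hbe]
      have h2 : b (b e) = e := hb e
      have h3 : ¬ (b (b e) = b e) := by rw [h2]; exact fun h => hbe h.symm
      rw [if_neg h3, h2]
  · intro e
    by_cases hbe : b e = e
    · simp only [if_pos hbe]
      have hes : e ∈ Finset.univ.filter (fun e' => ν e' = ν e ∧ b e' = e') := (hmem e).mpr hbe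
      have h1 := hqin (ν e) e hes
      simp only [Finset.mem_filter] at h1
      exact h1.2.1
    · simp only [if_neg hbe]; exact hbν e
  · intro e hbe; simp only [if_neg hbe]
  · intro k e1 he1 e2 he2
    simp only [Set.mem_setOf_eq] at he1 he2
    have key : ∀ e : E, ν e = k → (if b e = e then q (ν e) e else b e) = e →
        e ∈ (Finset.univ.filter (fun e => ν e = k ∧ b e = e)).filter (fun e => q k e = e) := by
      intro e hν hfix
      by_cases hbe : b e = e
      · rw [if_pos hbe] at hfix
        simp only [Finset.mem_filter]
        exact ⟨⟨Finset.mem_univ e, hν, hbe⟩, by rw [← hν]; exact hfix⟩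
      · rw [if_neg hbe] at hfix; exact absurd hfix hbe
    have h1 := key e1 he1.1 he1.2
    have h2 := key e2 he2.1 he2.2
    have := hqfix k
    exact Finset.card_le_one.mp this e1 h1 e2 h2


section core
variable {F : Type*} [Fintype F] [DecidableEq F]

lemma core_coloring (f g : Equiv.Perm F)
    (hf : ∀ e, f (f e) = e) (hg : ∀ e, g (g e) = e)
    (hf0 : ∀ e, f e ≠ e) (hg0 : ∀ e, g e ≠ e) :
    ∃ c : F → Fin 2, ∀ e, c (f e) ≠ c e ∧ c (g e) ≠ c e := by
  classical
  have hff : f * f = 1 := by ext e; simp [hf e]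
  have hgg : g * g = 1 := by ext e; simp [hg e]
  have hfinv : f⁻¹ = f := inv_eq_of_mul_eq_one_right hff
  have hginv : g⁻¹ = g := inv_eq_of_mul_eq_one_right hgg
  set σ : Equiv.Perm F := f * g with hσ
  have hσinv : σ⁻¹ = g * f := by rw [hσ, mul_inv_rev, hfinv, hginv]
  have hconj : g * σ * g⁻¹ = σ⁻¹ := by
    rw [hginv, hσinv, hσ]
    ext e; simp [mul_assoc, hg e]
  have key1 : ∀ (k : ℤ) (e : F), g ((σ ^ k) e) = (σ ^ (-k)) (g e) := by
    intro k e
    have h : (g * σ * g⁻¹) ^ k = g * σ ^ k * g⁻¹ := conj_zpow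
    rw [hconj, inv_zpow, ← zpow_neg] at h
    rw [eq_comm] at h
    have h2 : g * σ ^ k = σ ^ (-k) * g := by
      calc g * σ ^ k = (g * σ ^ k * g⁻¹) * g := by rw [inv_mul_cancel_right]
      _ = σ ^ (-k) * g := by rw [← h]
    have := congrArg (fun π : Equiv.Perm F => π e) h2
    simpa using this
  have key2 : f * σ = g := by rw [hσ, ← mul_assoc, hff, one_mul]
  have zadd : ∀ (a b : ℤ) (e : F), (σ ^ a) ((σ ^ b) e) = (σ ^ (a + b)) e := by
    intro a b e
    rw [← Equiv.Perm.mul_apply, ← zpow_add]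
  -- no element is in the same σ-cycle as its g-image
  have nsc : ∀ e : F, ¬ σ.SameCycle e (g e) := by
    rintro e ⟨k, hk⟩
    rcases Int.even_or_odd k with ⟨m, hm⟩ | ⟨m, hm⟩
    · apply hg0 ((σ ^ m) e)
      rw [key1 m e, ← hk, zadd, show (-m) + k = m by omega]
    · apply hf0 ((σ ^ (m + 1)) e)
      have h1 : f ((σ ^ (m + 1)) e) = g ((σ ^ m) e) := by
        have : (σ ^ (m + 1)) e = σ ((σ ^ m) e) := by
          rw [show σ ((σ ^ m) e) = (σ ^ (1:ℤ)) ((σ ^ m) e) by simp, zadd,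
            show (1:ℤ) + m = m + 1 by omega]
        rw [this, ← Equiv.Perm.mul_apply f σ, key2]
      rw [h1, key1 m e, ← hk, zadd, show (-m) + k = m + 1 by omega]
  -- orbit-minimum function
  set ord : F ≃ Fin (Fintype.card F) := Fintype.equivFin F with hord
  have hscrefl : ∀ e : F, σ.SameCycle e e := fun e => Equiv.Perm.SameCycle.refl σ e
  set mf : F → ℕ := fun e =>
    ((Finset.univ.filter (fun a => σ.SameCycle e a)).image (fun a => (ord a : ℕ))).min'
      ⟨(ord e : ℕ), Finset.mem_image.mpr ⟨e, Finset.mem_filter.mpr ⟨Finset.mem_univ e, hscrefl e⟩, rfl⟩⟩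
    with hmf
  have m_eq : ∀ e e' : F, σ.SameCycle e e' → mf e = mf e' := by
    intro e e' h
    have : (Finset.univ.filter (fun a => σ.SameCycle e a)) =
        (Finset.univ.filter (fun a => σ.SameCycle e' a)) := by
      ext a
      simp only [Finset.mem_filter, Finset.mem_univ, true_and]
      exact ⟨fun ha => h.symm.trans ha, fun ha => h.trans ha⟩
    simp only [hmf]
    congr 1
    rw [this]
  have m_ne : ∀ e e' : F, ¬ σ.SameCycle e e' → mf e ≠ mf e' := by
    intro e e' h heq
    have hne1 : ((Finset.univ.filter (fun a => σ.SameCycle e a)).image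
        (fun a => (ord a : ℕ))).Nonempty :=
      ⟨(ord e : ℕ), Finset.mem_image.mpr ⟨e, Finset.mem_filter.mpr
        ⟨Finset.mem_univ e, hscrefl e⟩, rfl⟩⟩
    have hne2 : ((Finset.univ.filter (fun a => σ.SameCycle e' a)).image
        (fun a => (ord a : ℕ))).Nonempty :=
      ⟨(ord e' : ℕ), Finset.mem_image.mpr ⟨e', Finset.mem_filter.mpr
        ⟨Finset.mem_univ e', hscrefl e'⟩, rfl⟩⟩
    have h1 : mf e ∈ (Finset.univ.filter (fun a => σ.SameCycle e a)).image
        (fun a => (ord a : ℕ)) := Finset.min'_mem _ hne1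
    have h2 : mf e' ∈ (Finset.univ.filter (fun a => σ.SameCycle e' a)).image
        (fun a => (ord a : ℕ)) := Finset.min'_mem _ hne2
    rw [Finset.mem_image] at h1 h2
    obtain ⟨a, ha, hav⟩ := h1
    obtain ⟨b, hb, hbv⟩ := h2
    have hab : a = b := by
      have : (ord a : ℕ) = (ord b : ℕ) := by rw [hav, hbv, heq]
      exact ord.injective (Fin.ext this)
    rw [Finset.mem_filter] at ha hb
    exact h (ha.2.trans (hab ▸ hb.2.symm))
  refine ⟨fun e => if mf e < mf (g e) then 0 else 1, ?_⟩
  intro e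
  have hne : mf e ≠ mf (g e) := m_ne e (g e) (nsc e)
  have hge : mf (g (g e)) = mf e := by rw [hg e]
  have hfe : mf (f e) = mf (g e) := by
    apply m_eq
    refine Equiv.Perm.SameCycle.symm ⟨1, ?_⟩
    rw [zpow_one, hσ, Equiv.Perm.mul_apply, hg e]
  have hgf : mf (g (f e)) = mf e := by
    have : g (f e) = σ⁻¹ e := by rw [hσinv, Equiv.Perm.mul_apply]
    rw [this]
    exact (m_eq e (σ⁻¹ e) ⟨-1, by simp⟩).symm
  constructor
  · show (if mf (f e) < mf (g (f e)) then (0:Fin 2) else 1) ≠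
      (if mf e < mf (g e) then (0:Fin 2) else 1)
    rw [hfe, hgf]
    rcases lt_or_gt_of_ne hne with h | h
    · rw [if_pos h, if_neg (not_lt.mpr (le_of_lt h))]; decide
    · rw [if_neg (not_lt.mpr (le_of_lt h)), if_pos h]; decide
  · show (if mf (g e) < mf (g (g e)) then (0:Fin 2) else 1) ≠
      (if mf e < mf (g e) then (0:Fin 2) else 1)
    rw [hge]
    rcases lt_or_gt_of_ne hne with h | h
    · rw [if_pos h, if_neg (not_lt.mpr (le_of_lt h))]; decide
    · rw [if_neg (not_lt.mpr (le_of_lt h)), if_pos h]; decide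

end core

section dbl

variable {E : Type*} [Fintype E] [DecidableEq E]

private def lift (f : E → E) : E ⊕ E → E ⊕ E := fun a =>
  match a with
  | .inl e => if f e = e then .inr e else .inl (f e)
  | .inr e => if f e = e then .inl e else .inr (f e)

lemma lift_invol (f : E → E) (hf : ∀ e, f (f e) = e) : ∀ a, lift f (lift f a) = a := by
  intro a
  match a with
  | .inl e =>
    by_cases h : f e = e
    · simp [lift, h]
    · have h2 : ¬ (f (f e) = f e) := by rw [hf e]; exact fun h3 => h h3.symm
      simp only [lift, if_neg h, if_neg h2, hf e]
      rw [if_neg (fun h3 => h h3.symm)]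
  | .inr e =>
    by_cases h : f e = e
    · simp [lift, h]
    · have h2 : ¬ (f (f e) = f e) := by rw [hf e]; exact fun h3 => h h3.symm
      simp only [lift, if_neg h, if_neg h2, hf e]
      rw [if_neg (fun h3 => h h3.symm)]

lemma lift_fpf (f : E → E) : ∀ a, lift f a ≠ a := by
  intro a
  match a with
  | .inl e =>
    by_cases h : f e = e <;> simp [lift, h]
  | .inr e =>
    by_cases h : f e = e <;> simp [lift, h]

lemma coloring_exists (f g : E → E) (hf : ∀ e, f (f e) = e) (hg : ∀ e, g (g e) = e) :
    ∃ c : E → Fin 2, (∀ e, f e ≠ e → c (f e) ≠ c e) ∧ (∀ e, g e ≠ e → c (g e) ≠ c e) := by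
  classical
  let f' : Equiv.Perm (E ⊕ E) := Function.Involutive.toPerm (lift f) (lift_invol f hf)
  let g' : Equiv.Perm (E ⊕ E) := Function.Involutive.toPerm (lift g) (lift_invol g hg)
  obtain ⟨c', hc'⟩ := core_coloring f' g' (lift_invol f hf) (lift_invol g hg)
    (lift_fpf f) (lift_fpf g)
  refine ⟨fun e => c' (.inl e), ?_, ?_⟩
  · intro e he
    have h1 := (hc' (.inl e)).1
    have h2 : f' (.inl e) = .inl (f e) := by
      show lift f (.inl e) = _
      simp [lift, he]
    rw [h2] at h1
    exact h1
  · intro e he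
    have h1 := (hc' (.inl e)).2
    have h2 : g' (.inl e) = .inl (g e) := by
      show lift g (.inl e) = _
      simp [lift, he]
    rw [h2] at h1
    exact h1
end dbl

section balance
variable {E : Type*} [Fintype E]

lemma balance (c : E → Fin 2) (S : Set E) (p : E → E)
    (hinv : ∀ e, p (p e) = e)
    (hexc : {e | e ∈ S ∧ (p e = e ∨ p e ∉ S ∨ c (p e) = c e)}.Subsingleton) :
    |({e | e ∈ S ∧ c e = 0}.ncard : ℤ) - ({e | e ∈ S ∧ c e = 1}.ncard : ℤ)| ≤ 1 := by
  classical
  set B := {e | e ∈ S ∧ (p e = e ∨ p e ∉ S ∨ c (p e) = c e)} with hB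
  have hpinj : Function.Injective p := fun a b h => by rw [← hinv a, h, hinv b]
  have key : ∀ e, e ∈ S → e ∉ B → p e ∈ S ∧ p e ∉ B ∧ c (p e) ≠ c e ∧ p e ≠ e := by
    intro e heS heB
    have h1 : ¬ (p e = e ∨ p e ∉ S ∨ c (p e) = c e) := fun h => heB ⟨heS, h⟩
    push_neg at h1
    obtain ⟨hne, hmem, hcol⟩ := h1
    refine ⟨hmem, ?_, hcol, hne⟩
    intro hpB
    rw [hB, Set.mem_setOf_eq] at hpB
    rcases hpB.2 with h | h | h
    · exact hne (hpinj h)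
    · exact h (by rw [hinv]; exact heS)
    · exact hcol (by rw [hinv] at h; exact h.symm)
  set T0 := {e | e ∈ S ∧ c e = 0} \ B with hT0
  set T1 := {e | e ∈ S ∧ c e = 1} \ B with hT1
  have himg : p '' T0 = T1 := by
    ext a
    constructor
    · rintro ⟨e, ⟨⟨heS, hc0⟩, heB⟩, rfl⟩
      obtain ⟨h1, h2, h3, _⟩ := key e heS heB
      refine ⟨⟨h1, ?_⟩, h2⟩
      rw [hc0] at h3
      omega
    · rintro ⟨⟨haS, hc1⟩, haB⟩
      obtain ⟨h1, h2, h3, _⟩ := key a haS haB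
      refine ⟨p a, ⟨⟨h1, ?_⟩, h2⟩, hinv a⟩
      rw [hc1] at h3
      omega
  have hcardT : T0.ncard = T1.ncard := by
    rw [← himg, Set.ncard_image_of_injective _ hpinj]
  -- decompose
  have hd0 : {e | e ∈ S ∧ c e = 0} = T0 ∪ ({e | e ∈ S ∧ c e = 0} ∩ B) := by
    rw [hT0, Set.diff_union_inter]
  have hd1 : {e | e ∈ S ∧ c e = 1} = T1 ∪ ({e | e ∈ S ∧ c e = 1} ∩ B) := by
    rw [hT1, Set.diff_union_inter]
  have hdis0 : Disjoint T0 ({e | e ∈ S ∧ c e = 0} ∩ B) :=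
    Set.disjoint_of_subset (le_refl _) Set.inter_subset_right (Set.disjoint_sdiff_left)
  have hdis1 : Disjoint T1 ({e | e ∈ S ∧ c e = 1} ∩ B) :=
    Set.disjoint_of_subset (le_refl _) Set.inter_subset_right (Set.disjoint_sdiff_left)
  have hc0 : {e | e ∈ S ∧ c e = 0}.ncard = T0.ncard + ({e | e ∈ S ∧ c e = 0} ∩ B).ncard := by
    have h := Set.ncard_union_eq hdis0 (Set.toFinite _) (Set.toFinite _)
    rw [← hd0] at h; exact h
  have hc1 : {e | e ∈ S ∧ c e = 1}.ncard = T1.ncard + ({e | e ∈ S ∧ c e = 1} ∩ B).ncard := by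
    have h := Set.ncard_union_eq hdis1 (Set.toFinite _) (Set.toFinite _)
    rw [← hd1] at h; exact h
  have hBsmall : ({e | e ∈ S ∧ c e = 0} ∩ B).ncard + ({e | e ∈ S ∧ c e = 1} ∩ B).ncard ≤ 1 := by
    have hdisB : Disjoint ({e | e ∈ S ∧ c e = 0} ∩ B) ({e | e ∈ S ∧ c e = 1} ∩ B) := by
      rw [Set.disjoint_left]
      rintro a ⟨⟨_, h0⟩, _⟩ ⟨⟨_, h1⟩, _⟩
      rw [h0] at h1
      exact absurd h1 (by decide)
    rw [← Set.ncard_union_eq hdisB (Set.toFinite _) (Set.toFinite _)]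
    have hsub : ({e | e ∈ S ∧ c e = 0} ∩ B) ∪ ({e | e ∈ S ∧ c e = 1} ∩ B) ⊆ B :=
      Set.union_subset Set.inter_subset_right Set.inter_subset_right
    have := hexc.anti hsub
    rcases this.eq_empty_or_singleton with h | ⟨a, h⟩
    · rw [h]; simp
    · rw [h]; simp
  rw [hc0, hc1, hcardT, abs_sub_le_iff]
  push_cast
  omega
end balance


theorem hilton_paired_coloring {X Y E : Type*} [Fintype X] [Fintype Y] [Fintype E]
    [DecidableEq E] (μX : E → X) (μY : E → Y)
    (heven : ∀ y : Y, Even {e : E | μY e = y}.ncard)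
    (P : Set (Sym2 E))
    (hpair : ∀ e₁ e₂ : E, s(e₁, e₂) ∈ P → e₁ ≠ e₂ ∧ μX e₁ = μX e₂)
    (hdisjoint : ∀ e : E, Set.Subsingleton {p ∈ P | e ∈ p})
    (hparallel : ∀ x : X, ∀ y : Y, Set.Subsingleton
      {e : E | μX e = x ∧ μY e = y ∧ ∃ e' : E, s(e, e') ∈ P ∧ μY e' ≠ y}) :
    ∃ c : E → Fin 2,
      (∀ x : X, |({e : E | μX e = x ∧ c e = 0}.ncard : ℤ)
        - ({e : E | μX e = x ∧ c e = 1}.ncard : ℤ)| ≤ 1) ∧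
      (∀ y : Y, |({e : E | μY e = y ∧ c e = 0}.ncard : ℤ)
        - ({e : E | μY e = y ∧ c e = 1}.ncard : ℤ)| ≤ 1) ∧
      (∀ x : X, ∀ y : Y, |({e : E | μX e = x ∧ μY e = y ∧ c e = 0}.ncard : ℤ)
        - ({e : E | μX e = x ∧ μY e = y ∧ c e = 1}.ncard : ℤ)| ≤ 1) ∧
      (∀ e₁ e₂ : E, s(e₁, e₂) ∈ P → c e₁ ≠ c e₂) := by
  classical
  -- uniqueness of P-partners
  have hPuniq : ∀ e e₁ e₂ : E, s(e, e₁) ∈ P → s(e, e₂) ∈ P → e₁ = e₂ := by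
    intro e e₁ e₂ h1 h2
    have m1 : s(e, e₁) ∈ {p ∈ P | e ∈ p} := ⟨h1, Sym2.mem_mk_left e e₁⟩
    have m2 : s(e, e₂) ∈ {p ∈ P | e ∈ p} := ⟨h2, Sym2.mem_mk_left e e₂⟩
    have heq := hdisjoint e m1 m2
    rw [Sym2.eq_iff] at heq
    rcases heq with ⟨_, h⟩ | ⟨h1', h2'⟩
    · exact h
    · exact h2'.trans h1'
  -- the P-partner involution
  set pP : E → E := fun e => if h : ∃ a, s(e, a) ∈ P then h.choose else e with hpPdef
  have hpP : ∀ e e' : E, s(e, e') ∈ P → pP e = e' := by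
    intro e e' he'
    have h : ∃ a, s(e, a) ∈ P := ⟨e', he'⟩
    rw [hpPdef]
    simp only [dif_pos h]
    exact hPuniq e _ e' h.choose_spec he'
  have hpPinv : ∀ e, pP (pP e) = e := by
    intro e
    by_cases h : ∃ a, s(e, a) ∈ P
    · have h1 : pP e = h.choose := by rw [hpPdef]; simp only [dif_pos h]
      have h2 : s(h.choose, e) ∈ P := by rw [Sym2.eq_swap]; exact h.choose_spec
      rw [h1, hpP _ _ h2]
    · have h1 : pP e = e := by rw [hpPdef]; simp only [dif_neg h]
      rw [h1, h1]
  have hpPX : ∀ e, μX (pP e) = μX e := by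
    intro e
    by_cases h : ∃ a, s(e, a) ∈ P
    · have h1 : pP e = h.choose := by rw [hpPdef]; simp only [dif_pos h]
      rw [h1, (hpair e h.choose h.choose_spec).2]
    · rw [hpPdef]; simp only [dif_neg h]
  -- x-side involution f
  obtain ⟨f, hfinv, hfX, hfP, hffix⟩ := combine μX pP hpPinv hpPX
  -- stage-1 y-side involution: pair within parallel classes
  obtain ⟨p1, hp1inv, hp1ν, -, hp1fix⟩ :=
    combine (fun e : E => (μX e, μY e)) id (fun _ => rfl) (fun _ => rfl)
  have hp1X : ∀ e, μX (p1 e) = μX e := fun e => congrArg Prod.fst (hp1ν e)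
  have hp1Y : ∀ e, μY (p1 e) = μY e := fun e => congrArg Prod.snd (hp1ν e)
  -- stage-2 y-side involution g
  obtain ⟨g, hginv, hgY, hgp1, hgfix⟩ := combine μY p1 hp1inv hp1Y
  -- the coloring
  obtain ⟨c, hcf, hcg⟩ := coloring_exists f g hfinv hginv
  refine ⟨c, ?_, ?_, ?_, ?_⟩
  · -- balance at each x
    intro x
    have hexc : {e | e ∈ {e : E | μX e = x} ∧
        (f e = e ∨ f e ∉ {e : E | μX e = x} ∨ c (f e) = c e)}.Subsingleton := by
      refine (hffix x).anti ?_
      rintro e ⟨he1, he2⟩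
      rcases he2 with h | h | h
      · exact ⟨he1, h⟩
      · exact absurd (show μX (f e) = x by rw [hfX e]; exact he1) h
      · by_cases hfe : f e = e
        · exact ⟨he1, hfe⟩
        · exact absurd h (hcf e hfe)
    exact balance c {e : E | μX e = x} f hfinv hexc
  · -- balance at each y
    intro y
    have hexc : {e | e ∈ {e : E | μY e = y} ∧
        (g e = e ∨ g e ∉ {e : E | μY e = y} ∨ c (g e) = c e)}.Subsingleton := by
      refine (hgfix y).anti ?_
      rintro e ⟨he1, he2⟩
      rcases he2 with h | h | h
      · exact ⟨he1, h⟩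
      · exact absurd (show μY (g e) = y by rw [hgY e]; exact he1) h
      · by_cases hge : g e = e
        · exact ⟨he1, hge⟩
        · exact absurd h (hcg e hge)
    exact balance c {e : E | μY e = y} g hginv hexc
  · -- balance on parallel classes
    intro x y
    have hexc : {e | e ∈ {e : E | μX e = x ∧ μY e = y} ∧
        (g e = e ∨ g e ∉ {e : E | μX e = x ∧ μY e = y} ∨ c (g e) = c e)}.Subsingleton := by
      refine (hp1fix (x, y)).anti ?_
      rintro e ⟨he1, he2⟩
      refine ⟨by rw [Prod.mk.injEq]; exact he1, ?_⟩
      by_cases hp1e : p1 e = e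
      · exact hp1e
      · exfalso
        have hgp : g e = p1 e := hgp1 e hp1e
        have hgne : g e ≠ e := by rw [hgp]; exact hp1e
        rcases he2 with h | h | h
        · exact hgne h
        · refine h ?_
          constructor
          · rw [hgp, hp1X e]; exact he1.1
          · rw [hgY e]; exact he1.2
        · exact hcg e hgne h
    have hbal := balance c {e : E | μX e = x ∧ μY e = y} g hginv hexc
    have hs0 : {e : E | μX e = x ∧ μY e = y ∧ c e = 0} =
        {e | e ∈ {e : E | μX e = x ∧ μY e = y} ∧ c e = 0} := by
      ext e; simp only [Set.mem_setOf_eq, and_assoc]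
    have hs1 : {e : E | μX e = x ∧ μY e = y ∧ c e = 1} =
        {e | e ∈ {e : E | μX e = x ∧ μY e = y} ∧ c e = 1} := by
      ext e; simp only [Set.mem_setOf_eq, and_assoc]
    rw [hs0, hs1]
    exact hbal
  · -- P-pairs get different colors
    intro e₁ e₂ hP12
    obtain ⟨hne, -⟩ := hpair e₁ e₂ hP12
    have h1 : pP e₁ = e₂ := hpP e₁ e₂ hP12
    have h2 : pP e₁ ≠ e₁ := by rw [h1]; exact fun h => hne h.symm
    have h3 : f e₁ = e₂ := by rw [hfP e₁ h2, h1]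
    have := hcf e₁ (by rw [h3]; exact fun h => hne h.symm)
    rw [h3] at this
    exact fun h => this h.symm
end

section
/- Let X and Y be finite sets and let A, B : X × Y → ℕ be edge-multiplicity functions (so that A + B is the multiplicity function of a bipartite multigraph with parts X and Y whose edge set is partitioned into the edges of A and the edges of B). Write deg_A(x) = Σ_{y∈Y} A(x,y), deg_A(y) = Σ_{x∈X} A(x,y), and similarly for B. Suppose that deg_B(y) ≥ deg_A(y) for every y ∈ Y, and that deg_A(x) ≤ η and deg_B(x) ≤ η for every x ∈ X, for some natural number η. Suppose moreover that for some vertex x_0 ∈ X, either (i) deg_A(x_0) > deg_B(x_0), or (ii) deg_A(x_0) = deg_B(x_0) is odd, η is even, and deg_B(y) is even for every y ∈ Y. Then there exists a multiplicity function C : X × Y → ℕ with C(x,y) ≤ A(x,y) + B(x,y) for all (x,y), such that: deg_C(y) = deg_A(y) for all y ∈ Y; deg_C(x_0) = deg_A(x_0) − 1; and deg_A(x) ≤ deg_C(x) ≤ η for all x ∈ X with x ≠ x_0. -/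
open SimpleGraph

section Helpers

variable {α : Type*} [Fintype α] [DecidableEq α]

lemma sum_one_point (f g : α → ℕ) (a : α) (h : ∀ b, b ≠ a → f b = g b) :
    (∑ b, f b) + g a = (∑ b, g b) + f a := by
  have hf := Finset.add_sum_erase Finset.univ f (Finset.mem_univ a)
  have hg := Finset.add_sum_erase Finset.univ g (Finset.mem_univ a)
  have he : ∑ b ∈ Finset.univ.erase a, f b = ∑ b ∈ Finset.univ.erase a, g b :=
    Finset.sum_congr rfl (fun b hb => h b (Finset.ne_of_mem_erase hb))
  omega

lemma sum_two_point (f g : α → ℕ) (a b : α) (hab : a ≠ b)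
    (h : ∀ c, c ≠ a → c ≠ b → f c = g c) :
    (∑ c, f c) + (g a + g b) = (∑ c, g c) + (f a + f b) := by
  have key : ∀ u : α → ℕ,
      ∑ c, u c = u a + (u b + ∑ c ∈ (Finset.univ.erase a).erase b, u c) := by
    intro u
    rw [Finset.add_sum_erase _ u (Finset.mem_erase.mpr ⟨Ne.symm hab, Finset.mem_univ b⟩),
      Finset.add_sum_erase _ u (Finset.mem_univ a)]
  have he : ∑ c ∈ (Finset.univ.erase a).erase b, f c
      = ∑ c ∈ (Finset.univ.erase a).erase b, g c := by
    refine Finset.sum_congr rfl (fun c hc => ?_)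
    have h1 := Finset.mem_erase.mp hc
    have h2 := Finset.mem_erase.mp h1.2
    exact h c h2.1 h1.1
  have kf := key f
  have kg := key g
  omega

lemma chain_imp_mem {r s : α → α → Prop} :
    ∀ (l : List α) (a : α), List.Chain r a l →
      (∀ x x', x ∈ a :: l → x' ∈ l → r x x' → s x x') → List.Chain s a l
  | [], a, _, _ => List.Chain.nil
  | c :: t, a, h, himp => by
    rw [List.Chain, List.chain_cons] at h ⊢
    refine ⟨himp a c (by simp) (by simp) h.1, ?_⟩
    exact chain_imp_mem t c h.2 (fun x x' hx hx' hr =>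
      himp x x' (by simp [List.mem_cons] at hx ⊢; tauto) (by simp [hx']) hr)

lemma chain_nodup {r : α → α → Prop} (b : α) :
    ∀ (l : List α) (a : α), List.Chain r a (l ++ [b]) → a ≠ b →
      ∃ l', List.Chain r a (l' ++ [b]) ∧ (a :: (l' ++ [b])).Nodup := by
  intro l
  induction l with
  | nil => exact fun a h hab => ⟨[], h, by simp [hab]⟩
  | cons c t ih =>
    intro a h hab
    rw [List.cons_append, List.Chain, List.chain_cons] at h
    obtain ⟨hac, hct⟩ := h
    by_cases hcb : c = b
    · subst hcb
      exact ⟨[], by simpa using List.Chain.cons hac List.Chain.nil, by simp [hab]⟩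
    · obtain ⟨t', ht'chain, ht'nodup⟩ := ih c hct hcb
      by_cases hac' : a = c
      · subst hac'
        exact ⟨t', ht'chain, ht'nodup⟩
      by_cases hmem : a ∈ c :: (t' ++ [b])
      · have ha : a ∈ c :: t' := by
          simp only [List.cons_append, List.mem_cons, List.mem_append,
            List.mem_singleton] at hmem ⊢
          tauto
        obtain ⟨s₀, u, hsu⟩ := List.append_of_mem ha
        -- c :: t' = s₀ ++ a :: u ; s₀ ≠ [] since a ≠ c
        cases s₀ with
        | nil => simp at hsu; exact absurd hsu.1.symm hac'
        | cons c' s₁ =>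
          have hc' : c = c' := by simpa using congrArg (fun l => l.head?) hsu
          subst hc'
          have ht' : t' = s₁ ++ a :: u := by simpa using hsu
          refine ⟨u, ?_, ?_⟩
          · have : List.Chain r c (s₁ ++ a :: (u ++ [b])) := by
              have := ht'chain
              rw [ht'] at this
              simpa using this
            exact (List.isChain_cons_split.mp this).2
          · have hsuffix : (a :: (u ++ [b])) <:+ (c :: (t' ++ [b])) := by
              refine ⟨c :: s₁, ?_⟩
              rw [ht']
              simp
            exact ht'nodup.sublist hsuffix.sublist
      · refine ⟨c :: t', ?_, ?_⟩
        · rw [List.cons_append, List.Chain, List.chain_cons]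
          exact ⟨hac, ht'chain⟩
        · rw [List.cons_append, List.nodup_cons]
          exact ⟨by simpa using hmem, ht'nodup⟩

end Helpers

lemma rec_aux {X Y : Type*} [Fintype X] [Fintype Y] [DecidableEq X] [DecidableEq Y] :
    ∀ (l : List X) (A B : X × Y → ℕ) (x₀ x₁ : X),
      List.Chain (fun x x' => ∃ y, 1 ≤ A (x, y) ∧ 1 ≤ B (x', y)) x₀ (l ++ [x₁]) →
      (x₀ :: (l ++ [x₁])).Nodup →
      ∃ C : X × Y → ℕ,
        (∀ p, C p ≤ A p + B p) ∧
        (∀ y, ∑ x, C (x, y) = ∑ x, A (x, y)) ∧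
        ((∑ y, C (x₀, y)) + 1 = ∑ y, A (x₀, y)) ∧
        (∑ y, C (x₁, y) = (∑ y, A (x₁, y)) + 1) ∧
        (∀ x, x ≠ x₀ → x ≠ x₁ → ∑ y, C (x, y) = ∑ y, A (x, y)) := by
  intro l
  induction l with
  | nil =>
    intro A B x₀ x₁ hchain hnodup
    rw [List.nil_append, List.Chain, List.chain_cons] at hchain
    obtain ⟨⟨y₁, hA1, hB1⟩, -⟩ := hchain
    have hne : x₀ ≠ x₁ := by simp at hnodup; tauto
    have hne' : x₁ ≠ x₀ := Ne.symm hne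
    set D : X × Y → ℕ := fun p =>
      if p = (x₀, y₁) then A p - 1 else if p = (x₁, y₁) then A p + 1 else A p with hD
    have hDother : ∀ p, p ≠ (x₀, y₁) → p ≠ (x₁, y₁) → D p = A p := by
      intro p h1 h2
      simp only [hD]
      rw [if_neg h1, if_neg h2]
    have hD0 : D (x₀, y₁) = A (x₀, y₁) - 1 := by
      simp only [hD]
      simp
    have hD1 : D (x₁, y₁) = A (x₁, y₁) + 1 := by
      simp only [hD]
      simp [hne']
    refine ⟨D, ?_, ?_, ?_, ?_, ?_⟩
    · intro p
      by_cases h1 : p = (x₀, y₁)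
      · subst h1; rw [hD0]; omega
      · by_cases h2 : p = (x₁, y₁)
        · subst h2; rw [hD1]; omega
        · rw [hDother p h1 h2]; omega
    · intro y
      by_cases hy : y = y₁
      · rw [hy]
        have key := sum_two_point (fun x => D (x, y₁)) (fun x => A (x, y₁)) x₀ x₁ hne
          (fun c h1 h2 => hDother (c, y₁) (by simp [h1]) (by simp [h2]))
        rw [hD0, hD1] at key
        omega
      · exact Finset.sum_congr rfl (fun x _ => hDother (x, y) (by simp [hy]) (by simp [hy]))
    · have key := sum_one_point (fun y => D (x₀, y)) (fun y => A (x₀, y)) y₁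
        (fun b hb => hDother (x₀, b) (by simp [hb]) (by simp [hb]))
      rw [hD0] at key
      omega
    · have key := sum_one_point (fun y => D (x₁, y)) (fun y => A (x₁, y)) y₁
        (fun b hb => hDother (x₁, b) (by simp [hb]) (by simp [hb]))
      rw [hD1] at key
      omega
    · intro x h0 h1
      exact Finset.sum_congr rfl (fun y _ => hDother (x, y) (by simp [h0]) (by simp [h1]))
  | cons x₂ t ih =>
    intro A B x₀ x₁ hchain hnodup
    rw [List.cons_append, List.Chain, List.chain_cons] at hchain
    obtain ⟨⟨y₁, hA1, hB1⟩, hchain'⟩ := hchain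
    rw [List.cons_append, List.nodup_cons] at hnodup
    obtain ⟨hx0nm, hnd2⟩ := hnodup
    have hx02 : x₀ ≠ x₂ := by simp at hx0nm; tauto
    have hx01 : x₀ ≠ x₁ := by simp at hx0nm; tauto
    have hx2nm : x₂ ∉ t ++ [x₁] := (List.nodup_cons.mp hnd2).1
    have hx21 : x₂ ≠ x₁ := by simp at hx2nm; tauto
    have hx20 : x₂ ≠ x₀ := Ne.symm hx02
    have hx10 : x₁ ≠ x₀ := Ne.symm hx01
    have hx12 : x₁ ≠ x₂ := Ne.symm hx21
    set A' : X × Y → ℕ := fun p =>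
      if p = (x₀, y₁) then A p - 1 else if p = (x₂, y₁) then A p + 1 else A p with hA'def
    set B' : X × Y → ℕ := fun p =>
      if p = (x₀, y₁) then B p + 1 else if p = (x₂, y₁) then B p - 1 else B p with hB'def
    have hA'other : ∀ p, p ≠ (x₀, y₁) → p ≠ (x₂, y₁) → A' p = A p := by
      intro p h1 h2
      simp only [hA'def]
      rw [if_neg h1, if_neg h2]
    have hA'x0 : A' (x₀, y₁) = A (x₀, y₁) - 1 := by
      simp only [hA'def]
      simp
    have hA'x2 : A' (x₂, y₁) = A (x₂, y₁) + 1 := by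
      simp only [hA'def]
      simp [hx20]
    have hB'other : ∀ p, p ≠ (x₀, y₁) → p ≠ (x₂, y₁) → B' p = B p := by
      intro p h1 h2
      simp only [hB'def]
      rw [if_neg h1, if_neg h2]
    have hB'x0 : B' (x₀, y₁) = B (x₀, y₁) + 1 := by
      simp only [hB'def]
      simp
    have hB'x2 : B' (x₂, y₁) = B (x₂, y₁) - 1 := by
      simp only [hB'def]
      simp [hx20]
    have hchain'' : List.Chain (fun x x' => ∃ y, 1 ≤ A' (x, y) ∧ 1 ≤ B' (x', y))
        x₂ (t ++ [x₁]) := by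
      refine chain_imp_mem _ _ hchain' (fun x x' hx hx' hr => ?_)
      obtain ⟨y, hAy, hBy⟩ := hr
      have hxne0 : x ≠ x₀ := by rintro rfl; exact hx0nm hx
      have hx'ne0 : x' ≠ x₀ := by rintro rfl; exact hx0nm (List.mem_cons_of_mem _ hx')
      have hx'ne2 : x' ≠ x₂ := by rintro rfl; exact hx2nm hx'
      refine ⟨y, ?_, ?_⟩
      · by_cases h2 : (x, y) = (x₂, y₁)
        · rw [h2] at hAy ⊢
          rw [hA'x2]
          omega
        · rw [hA'other (x, y) (by simp [hxne0]) h2]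
          exact hAy
      · rw [hB'other (x', y) (by simp [hx'ne0]) (by simp [hx'ne2])]
        exact hBy
    obtain ⟨C, hC1, hC2, hC3, hC4, hC5⟩ := ih A' B' x₂ x₁ hchain'' hnd2
    have hAB : ∀ p, A' p + B' p = A p + B p := by
      intro p
      by_cases h1 : p = (x₀, y₁)
      · rw [h1, hA'x0, hB'x0]; omega
      · by_cases h2 : p = (x₂, y₁)
        · rw [h2, hA'x2, hB'x2]; omega
        · rw [hA'other p h1 h2, hB'other p h1 h2]
    have hcolA' : ∀ y, ∑ x, A' (x, y) = ∑ x, A (x, y) := by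
      intro y
      by_cases hy : y = y₁
      · rw [hy]
        have key := sum_two_point (fun x => A' (x, y₁)) (fun x => A (x, y₁)) x₀ x₂ hx02
          (fun c h1 h2 => hA'other (c, y₁) (by simp [h1]) (by simp [h2]))
        rw [hA'x0, hA'x2] at key
        omega
      · exact Finset.sum_congr rfl
          (fun x _ => hA'other (x, y) (by simp [hy]) (by simp [hy]))
    have hrow0 : (∑ y, A' (x₀, y)) + 1 = ∑ y, A (x₀, y) := by
      have key := sum_one_point (fun y => A' (x₀, y)) (fun y => A (x₀, y)) y₁
        (fun b hb => hA'other (x₀, b) (by simp [hb]) (by simp [hb]))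
      rw [hA'x0] at key
      omega
    have hrow2 : ∑ y, A' (x₂, y) = (∑ y, A (x₂, y)) + 1 := by
      have key := sum_one_point (fun y => A' (x₂, y)) (fun y => A (x₂, y)) y₁
        (fun b hb => hA'other (x₂, b) (by simp [hb]) (by simp [hb]))
      rw [hA'x2] at key
      omega
    have hrowother : ∀ x, x ≠ x₀ → x ≠ x₂ → ∑ y, A' (x, y) = ∑ y, A (x, y) := by
      intro x h0 h2
      exact Finset.sum_congr rfl
        (fun y _ => hA'other (x, y) (by simp [h0]) (by simp [h2]))
    refine ⟨C, ?_, ?_, ?_, ?_, ?_⟩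
    · intro p
      have h1 := hC1 p
      have h2 := hAB p
      omega
    · intro y
      rw [hC2 y, hcolA' y]
    · have h0 := hC5 x₀ hx02 hx01
      omega
    · rw [hC4, hrowother x₁ hx10 hx12]
    · intro x hx0 hx1
      by_cases hx2 : x = x₂
      · subst hx2
        omega
      · rw [hC5 x hx2 hx1, hrowother x hx0 hx2]

lemma counting_aux {X Y : Type*} [Fintype X] [Fintype Y] [DecidableEq X]
    (A B : X × Y → ℕ) (η : ℕ)
    (hY : ∀ y : Y, ∑ x, A (x, y) ≤ ∑ x, B (x, y))
    (x₀ : X)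
    (hx₀ : (∑ y, B (x₀, y) < ∑ y, A (x₀, y)) ∨
      ((∑ y, A (x₀, y) = ∑ y, B (x₀, y)) ∧ Odd (∑ y, A (x₀, y)) ∧ Even η ∧
        ∀ y : Y, Even (∑ x, B (x, y))))
    (hBS : ∀ x : X, x ≠ x₀ → ∑ y, B (x, y) ≤ η)
    (S : Finset X) (hx₀S : x₀ ∈ S)
    (hclosed : ∀ x ∈ S, ∀ y : Y, 1 ≤ A (x, y) → ∀ x' : X, 1 ≤ B (x', y) → x' ∈ S) :
    ∃ x₁ ∈ S, x₁ ≠ x₀ ∧ ∑ y, A (x₁, y) ≠ η := by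
  classical
  by_contra hcon
  push_neg at hcon
  -- hcon : ∀ x₁ ∈ S, x₁ ≠ x₀ → ∑ y, A (x₁, y) = η
  set T : Finset Y := Finset.univ.filter (fun y => ∃ x ∈ S, 1 ≤ A (x, y)) with hT
  -- step 1 : ∑_{x ∈ S} row A = ∑_{x ∈ S} ∑_{y ∈ T}
  have h1 : ∑ x ∈ S, ∑ y, A (x, y) = ∑ x ∈ S, ∑ y ∈ T, A (x, y) := by
    refine Finset.sum_congr rfl (fun x hx => ?_)
    refine (Finset.sum_subset (Finset.subset_univ T) ?_).symm
    intro y _ hyT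
    by_contra hA0
    exact hyT (by simp only [hT, Finset.mem_filter, Finset.mem_univ, true_and]
                  exact ⟨x, hx, by omega⟩)
  have h2 : ∑ x ∈ S, ∑ y ∈ T, A (x, y) = ∑ y ∈ T, ∑ x ∈ S, A (x, y) :=
    Finset.sum_comm
  have h3 : ∀ y, ∑ x ∈ S, A (x, y) ≤ ∑ x, A (x, y) := by
    intro y
    exact Finset.sum_le_sum_of_subset (Finset.subset_univ S)
  have h5 : ∑ y ∈ T, ∑ x, B (x, y) = ∑ x ∈ S, ∑ y ∈ T, B (x, y) := by
    rw [Finset.sum_comm]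
    refine (Finset.sum_subset (Finset.subset_univ S) ?_).symm
    intro x _ hxS
    refine Finset.sum_eq_zero (fun y hy => ?_)
    simp only [hT, Finset.mem_filter, Finset.mem_univ, true_and] at hy
    obtain ⟨x', hx'S, hx'A⟩ := hy
    by_contra hB0
    exact hxS (hclosed x' hx'S y hx'A x (by omega))
  have h6 : ∀ x, ∑ y ∈ T, B (x, y) ≤ ∑ y, B (x, y) := by
    intro x
    exact Finset.sum_le_sum_of_subset (Finset.subset_univ T)
  -- combined chain:
  have hchainA : ∑ x ∈ S, ∑ y, A (x, y) ≤ ∑ y ∈ T, ∑ x, B (x, y) := by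
    rw [h1, h2]
    refine Finset.sum_le_sum (fun y _ => ?_)
    exact le_trans (h3 y) (hY y)
  have hchainB : ∑ y ∈ T, ∑ x, B (x, y) ≤ ∑ x ∈ S, ∑ y, B (x, y) := by
    rw [h5]
    exact Finset.sum_le_sum (fun x _ => h6 x)
  -- row sum values on S
  have hSA : ∑ x ∈ S, ∑ y, A (x, y) = (∑ y, A (x₀, y)) + (S.card - 1) * η := by
    rw [← Finset.add_sum_erase _ _ hx₀S]
    have : ∑ x ∈ S.erase x₀, ∑ y, A (x, y) = ∑ x ∈ S.erase x₀, η := by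
      refine Finset.sum_congr rfl (fun x hx => ?_)
      exact hcon x (Finset.mem_of_mem_erase hx) (Finset.ne_of_mem_erase hx)
    rw [this, Finset.sum_const, smul_eq_mul, Finset.card_erase_of_mem hx₀S]
  have hSB : ∑ x ∈ S, ∑ y, B (x, y) ≤ (∑ y, B (x₀, y)) + (S.card - 1) * η := by
    rw [← Finset.add_sum_erase _ _ hx₀S]
    have : ∑ x ∈ S.erase x₀, ∑ y, B (x, y) ≤ ∑ x ∈ S.erase x₀, η :=
      Finset.sum_le_sum (fun x hx => hBS x (Finset.ne_of_mem_erase hx))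
    rw [Finset.sum_const, smul_eq_mul, Finset.card_erase_of_mem hx₀S] at this
    omega
  rcases hx₀ with hlt | ⟨heq, hodd, heven, hBeven⟩
  · omega
  · have hM : ∑ y ∈ T, ∑ x, B (x, y) = (∑ y, A (x₀, y)) + (S.card - 1) * η := by
      omega
    have hModd : Odd (∑ y ∈ T, ∑ x, B (x, y)) := by
      rw [hM]
      have : Even ((S.card - 1) * η) := heven.mul_left _
      rcases hodd with ⟨k, hk⟩
      rcases this with ⟨m, hm⟩
      exact ⟨k + m, by omega⟩
    have hMeven : Even (∑ y ∈ T, ∑ x, B (x, y)) :=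
      Finset.sum_induction _ Even (fun a b => Even.add) (Even.zero)
        (fun y _ => hBeven y)
    rcases hModd with ⟨k, hk⟩
    rcases hMeven with ⟨m, hm⟩
    omega

theorem reduction_lemma {X Y : Type*} [Fintype X] [Fintype Y] [DecidableEq X]
    (A B : X × Y → ℕ) (η : ℕ)
    (hY : ∀ y : Y, ∑ x, A (x, y) ≤ ∑ x, B (x, y))
    (hA : ∀ x : X, ∑ y, A (x, y) ≤ η) (hB : ∀ x : X, ∑ y, B (x, y) ≤ η)
    (x₀ : X)
    (hx₀ : (∑ y, B (x₀, y) < ∑ y, A (x₀, y)) ∨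
      ((∑ y, A (x₀, y) = ∑ y, B (x₀, y)) ∧ Odd (∑ y, A (x₀, y)) ∧ Even η ∧
        ∀ y : Y, Even (∑ x, B (x, y)))) :
    ∃ C : X × Y → ℕ,
      (∀ p : X × Y, C p ≤ A p + B p) ∧
      (∀ y : Y, ∑ x, C (x, y) = ∑ x, A (x, y)) ∧
      (∑ y, C (x₀, y) = ∑ y, A (x₀, y) - 1) ∧
      (∀ x : X, x ≠ x₀ → ∑ y, A (x, y) ≤ ∑ y, C (x, y) ∧ ∑ y, C (x, y) ≤ η) := by
  classical
  set r : X → X → Prop := fun x x' => ∃ y, 1 ≤ A (x, y) ∧ 1 ≤ B (x', y) with hr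
  set S : Finset X := Finset.univ.filter (fun x => Relation.ReflTransGen r x₀ x) with hS
  have hx₀S : x₀ ∈ S := by
    simp only [hS, Finset.mem_filter, Finset.mem_univ, true_and]
    exact Relation.ReflTransGen.refl
  have hclosed : ∀ x ∈ S, ∀ y : Y, 1 ≤ A (x, y) → ∀ x' : X, 1 ≤ B (x', y) → x' ∈ S := by
    intro x hx y hAy x' hBx'
    simp only [hS, Finset.mem_filter, Finset.mem_univ, true_and] at hx ⊢
    exact hx.tail ⟨y, hAy, hBx'⟩
  obtain ⟨x₁, hx₁S, hx₁ne, hx₁η⟩ :=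
    counting_aux A B η hY x₀ hx₀ (fun x _ => hB x) S hx₀S hclosed
  have hlt : ∑ y, A (x₁, y) < η := lt_of_le_of_ne (hA x₁) hx₁η
  have hreach : Relation.ReflTransGen r x₀ x₁ := by
    simpa only [hS, Finset.mem_filter, Finset.mem_univ, true_and] using hx₁S
  obtain ⟨l, hl, hlast⟩ := List.exists_isChain_cons_of_relationReflTransGen hreach
  have hlne : l ≠ [] := by
    rintro rfl
    simp at hlast
    exact hx₁ne hlast.symm
  have h1 : l.getLast hlne = x₁ := by
    rw [List.getLast_cons hlne] at hlast
    exact hlast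
  have h2 : l = l.dropLast ++ [x₁] := by
    conv_lhs => rw [← List.dropLast_append_getLast hlne]
    rw [h1]
  rw [h2] at hl
  obtain ⟨l', hchain, hnodup⟩ := chain_nodup x₁ l.dropLast x₀ hl (Ne.symm hx₁ne)
  obtain ⟨C, p1, p2, p3, p4, p5⟩ := rec_aux l' A B x₀ x₁ hchain hnodup
  refine ⟨C, p1, p2, by omega, ?_⟩
  intro x hx
  by_cases hx1 : x = x₁
  · subst hx1
    rw [p4]
    exact ⟨by omega, by omega⟩
  · rw [p5 x hx hx1]
    exact ⟨le_refl _, hA x⟩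
end

section
/- Let P be a path with two edges in the complete graph K_5 and let e be an edge of K_5 vertex-disjoint from P. Then there is no Hamiltonian cycle decomposition (C_1, C_2) of K_5 such that both edges of P lie in C_1 and e lies in C_2. -/
open SimpleGraph

/-!
A Hamiltonian cycle of a graph on five vertices `a, b, c, x, y` is a spanning subgraph in which
every vertex has exactly two neighbours. If it contains the path `a - b - c`, then `b` has no
further neighbours; were `xy` not an edge of the cycle, both `x` and `y` would have to be joined
to `a` (and `c`), giving `a` the three neighbours `b, x, y`. So every Hamiltonian cycle of `K₅`
through `a - b - c` contains `xy`, which then cannot lie in a second, edge-disjoint cycle.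
-/

namespace Set

variable {α : Type*} {s : Set α} {p q : α}

theorem eq_pair_of_mem_of_ncard_eq_two (hs : s.ncard = 2) (hp : p ∈ s) (hq : q ∈ s)
    (hpq : p ≠ q) : s = {p, q} :=
  (eq_of_subset_of_ncard_le (pair_subset hp hq) (by rw [hs, ncard_pair hpq])
    (finite_of_ncard_ne_zero (by omega))).symm

theorem eq_pair_of_subset_of_ncard_eq_two (hs : s.ncard = 2) (h : s ⊆ {p, q}) : s = {p, q} :=
  eq_of_subset_of_ncard_le h ((ncard_insert_le p {q}).trans (by simp [hs]))

end Set

theorem SimpleGraph.adj_opposite_of_ncard_neighborSet_eq_two {V : Type*} {H : SimpleGraph V}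
    (hdeg : ∀ v, (H.neighborSet v).ncard = 2) {a b c x y : V}
    (henum : Function.Bijective ![a, b, c, x, y]) (hab : H.Adj a b) (hbc : H.Adj b c) :
    H.Adj x y := by
  have hne {i j : Fin 5} (hij : i ≠ j) : ![a, b, c, x, y] i ≠ ![a, b, c, x, y] j :=
    henum.1.ne hij
  have hac : a ≠ c := hne (i := 0) (j := 2) (by decide)
  have hxa : x ≠ a := hne (i := 3) (j := 0) (by decide)
  have hxb : x ≠ b := hne (i := 3) (j := 1) (by decide)
  have hxc : x ≠ c := hne (i := 3) (j := 2) (by decide)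
  have hya : y ≠ a := hne (i := 4) (j := 0) (by decide)
  have hyb : y ≠ b := hne (i := 4) (j := 1) (by decide)
  have hyc : y ≠ c := hne (i := 4) (j := 2) (by decide)
  have hxy : x ≠ y := hne (i := 3) (j := 4) (by decide)
  have hcover (t : V) : t = a ∨ t = b ∨ t = c ∨ t = x ∨ t = y := by
    obtain ⟨i, rfl⟩ := henum.2 t
    fin_cases i <;> simp
  have hb : H.neighborSet b = {a, c} :=
    Set.eq_pair_of_mem_of_ncard_eq_two (hdeg b) hab.symm hbc hac
  have hside {z w : V} (hza : z ≠ a) (hzc : z ≠ c) (hzw : ¬H.Adj z w)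
      (hcov : ∀ t, t = a ∨ t = b ∨ t = c ∨ t = z ∨ t = w) : H.neighborSet z = {a, c} := by
    refine Set.eq_pair_of_subset_of_ncard_eq_two (hdeg z) fun t ht => ?_
    rcases hcov t with rfl | rfl | rfl | rfl | rfl
    · exact .inl rfl
    · exact absurd (hb ▸ ht.symm : z ∈ ({a, c} : Set V)) (by simp [hza, hzc])
    · exact .inr rfl
    · exact absurd ht H.irrefl
    · exact absurd ht hzw
  by_contra hnadj
  have hx := hside hxa hxc hnadj hcover
  have hy := hside hya hyc (hnadj ∘ .symm) fun t => by have := hcover t; tauto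
  have ha : H.neighborSet a = {b, x} := Set.eq_pair_of_mem_of_ncard_eq_two (hdeg a) hab
    (H.adj_symm (hx.symm ▸ Set.mem_insert a _ : a ∈ H.neighborSet x)) hxb.symm
  have hay : y ∈ H.neighborSet a :=
    H.adj_symm (hy.symm ▸ Set.mem_insert a _ : a ∈ H.neighborSet y)
  rw [ha] at hay
  exact hay.elim hyb (hxy ∘ .symm)

theorem IsHamCycleEdgeSet.opposite_edge_mem {V : Type*} [DecidableEq V] {G : SimpleGraph V}
    {C : Set (Sym2 V)} (hC : IsHamCycleEdgeSet G C) {a b c x y : V}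
    (henum : Function.Bijective ![a, b, c, x, y]) (hab : s(a, b) ∈ C) (hbc : s(b, c) ∈ C) :
    s(x, y) ∈ C := by
  obtain ⟨v, w, hw, rfl⟩ := hC
  simp only [Set.mem_ofPred_eq, ← Walk.mem_edges_toSubgraph, Subgraph.mem_edgeSet] at hab hbc ⊢
  exact adj_opposite_of_ncard_neighborSet_eq_two (H := w.toSubgraph.spanningCoe)
    (fun u => hw.isCycle.ncard_neighborSet_toSubgraph_eq_two (hw.mem_support u)) henum hab hbc

theorem no_extension_P3_K2 (a b c x y : Fin 5)
    (hinj : Function.Injective ![a, b, c, x, y]) :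
    ¬∃ C : Fin 2 → Set (Sym2 (Fin 5)),
      IsHamDecomp (⊤ : SimpleGraph (Fin 5)) C ∧
      s(a, b) ∈ C 0 ∧ s(b, c) ∈ C 0 ∧ s(x, y) ∈ C 1 := by
  rintro ⟨C, ⟨hham, hdisj, -⟩, hab, hbc, hxy⟩
  have hxy₀ := (hham 0).opposite_edge_mem (Finite.injective_iff_bijective.mp hinj) hab hbc
  exact Set.disjoint_left.mp (hdisj zero_ne_one) hxy₀ hxy
end
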